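/- arXiv:1912.10863 — 2 statements merged into one kernel-verified Lean document; each statement's English description precedes it below -/
import Mathlib

section
/- Let (g_t)_{t∈[0,1]} be a smooth isotopy in G_o with g_0 = id, let f_t be the associated Hamiltonian functions normalized by f_t(0,0) = 0, let S((g_t)) = ∫₀¹ f_t(1,0) dt, and let φ̃ be the lift of the boundary isotopy with φ̃_0 = id. Then the limit σ̄(g₁) = lim_{n→∞} σ(g₁ⁿ)/n exists and σ̄(g₁) − S((g_t)) = π·rot̃(φ̃₁), where rot̃(φ̃₁) = lim_{n→∞} φ̃₁ⁿ(0)/(2πn) is the translation number. -/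
open MeasureTheory Filter Topology Set Function Real

noncomputable section

/-- The closed unit disk in `ℝ²`. -/
def disk : Set (ℝ × ℝ) := {p | p.1 ^ 2 + p.2 ^ 2 ≤ 1}

/-- The boundary circle of the unit disk. -/
def bdry : Set (ℝ × ℝ) := {p | p.1 ^ 2 + p.2 ^ 2 = 1}

/-- Partial derivative in the `x`-direction. -/
def pdx (f : ℝ × ℝ → ℝ) (p : ℝ × ℝ) : ℝ := fderiv ℝ f p (1, 0)

/-- Partial derivative in the `y`-direction. -/
def pdy (f : ℝ × ℝ → ℝ) (p : ℝ × ℝ) : ℝ := fderiv ℝ f p (0, 1)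

/-- The Jacobian determinant of a map `ℝ² → ℝ²`. -/
def jacDet (g : ℝ × ℝ → ℝ × ℝ) (p : ℝ × ℝ) : ℝ :=
  pdx (fun q => (g q).1) p * pdy (fun q => (g q).2) p -
    pdy (fun q => (g q).1) p * pdx (fun q => (g q).2) p

/-- `g` represents an element of `Symp(D)`: a `C^∞` diffeomorphism of the closed
unit disk onto itself (smooth up to the boundary, i.e. the restriction of a
globally smooth map with globally smooth inverse on the disk) whose Jacobian
determinant is identically `1` on the disk. -/
def IsSymp (g : ℝ × ℝ → ℝ × ℝ) : Prop :=
  ContDiff ℝ (⊤ : ℕ∞) g ∧ MapsTo g disk disk ∧ (∀ p ∈ disk, jacDet g p = 1) ∧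
    ∃ g' : ℝ × ℝ → ℝ × ℝ, ContDiff ℝ (⊤ : ℕ∞) g' ∧ MapsTo g' disk disk ∧
      (∀ p ∈ disk, g' (g p) = p) ∧ (∀ p ∈ disk, g (g' p) = p)

/-- `g` represents an element of `G_o`: a symplectomorphism of the disk fixing the origin. -/
def IsSympO (g : ℝ × ℝ → ℝ × ℝ) : Prop :=
  IsSymp g ∧ g (0, 0) = (0, 0)

/-- `τ_λ(g) = ∫_D g*λ ∧ λ` for `λ = (x dy - y dx)/2`, written out in coordinates. -/
def tauL (g : ℝ × ℝ → ℝ × ℝ) : ℝ :=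
  (1 / 4) * ∫ p in disk,
    (p.1 * ((g p).1 * pdx (fun q => (g q).2) p - (g p).2 * pdx (fun q => (g q).1) p) +
     p.2 * ((g p).1 * pdy (fun q => (g q).2) p - (g p).2 * pdy (fun q => (g q).1) p))

/-- `σ(g) = ∫_γ (g*λ - λ)` along the radial path `γ(t) = (t,0)`, in coordinates. -/
def sigmaQ (g : ℝ × ℝ → ℝ × ℝ) : ℝ :=
  (1 / 2) * ∫ t in (0:ℝ)..1,
    ((g (t, 0)).1 * pdx (fun q => (g q).2) (t, 0) -
      (g (t, 0)).2 * pdx (fun q => (g q).1) (t, 0))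

/-- `G` is a smooth isotopy in `Symp(D)` starting at the identity. -/
def IsIsotopy (G : ℝ → ℝ × ℝ → ℝ × ℝ) : Prop :=
  ContDiff ℝ (⊤ : ℕ∞) (fun q : ℝ × (ℝ × ℝ) => G q.1 q.2) ∧
    (∀ t ∈ Icc (0:ℝ) 1, IsSymp (G t)) ∧ (∀ p ∈ disk, G 0 p = p)

/-- `f` is a family of Hamiltonian functions for the isotopy `G`, i.e.
`i_{X_t} ω = d f_t` where `X_t = (∂g_t/∂t) ∘ g_t⁻¹`; since `g_t` maps the disk
onto itself this is expressed at the points `G t p`, `p ∈ D`. -/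
def IsHam (G : ℝ → ℝ × ℝ → ℝ × ℝ) (f : ℝ → ℝ × ℝ → ℝ) : Prop :=
  ContDiff ℝ (⊤ : ℕ∞) (fun q : ℝ × (ℝ × ℝ) => f q.1 q.2) ∧
    ∀ t ∈ Icc (0:ℝ) 1, ∀ p ∈ disk,
      pdx (f t) (G t p) = -(deriv (fun s => G s p) t).2 ∧
      pdy (f t) (G t p) = (deriv (fun s => G s p) t).1

/-- `φ` is the lift of the boundary isotopy of `G`, with `φ 0 = id`. -/
def IsBoundaryLift (G : ℝ → ℝ × ℝ → ℝ × ℝ) (φ : ℝ → ℝ → ℝ) : Prop :=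
  ContDiff ℝ (⊤ : ℕ∞) (fun q : ℝ × ℝ => φ q.1 q.2) ∧
    (∀ t ∈ Icc (0:ℝ) 1, StrictMono (φ t) ∧ ∀ θ : ℝ, φ t (θ + 2 * π) = φ t θ + 2 * π) ∧
    (∀ θ : ℝ, φ 0 θ = θ) ∧
    (∀ t ∈ Icc (0:ℝ) 1, ∀ θ : ℝ,
      G t (Real.cos θ, Real.sin θ) = (Real.cos (φ t θ), Real.sin (φ t θ)))


namespace Statement13

variable {F : Type*} [NormedAddCommGroup F] [NormedSpace ℝ F]

/-- derivative along a horizontal line -/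
lemma hasDerivAt_fix2 (u : ℝ × ℝ → F) (a b : ℝ) (hu : DifferentiableAt ℝ u (a, b)) :
    HasDerivAt (fun t => u (t, b)) (fderiv ℝ u (a, b) (1, 0)) a := by
  have hc : HasDerivAt (fun t : ℝ => ((t, b) : ℝ × ℝ)) ((1:ℝ), (0:ℝ)) a :=
    (hasDerivAt_id a).prodMk (hasDerivAt_const a b)
  exact hu.hasFDerivAt.comp_hasDerivAt a hc

/-- derivative along a vertical line -/
lemma hasDerivAt_fix1 (u : ℝ × ℝ → F) (a b : ℝ) (hu : DifferentiableAt ℝ u (a, b)) :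
    HasDerivAt (fun t => u (a, t)) (fderiv ℝ u (a, b) (0, 1)) b := by
  have hc : HasDerivAt (fun t : ℝ => ((a, t) : ℝ × ℝ)) ((0:ℝ), (1:ℝ)) b :=
    (hasDerivAt_const b a).prodMk (hasDerivAt_id b)
  exact hu.hasFDerivAt.comp_hasDerivAt b hc

lemma deriv_fix2 (u : ℝ × ℝ → F) (a b : ℝ) (hu : DifferentiableAt ℝ u (a, b)) :
    deriv (fun t => u (t, b)) a = fderiv ℝ u (a, b) (1, 0) :=
  (hasDerivAt_fix2 u a b hu).deriv

lemma deriv_fix1 (u : ℝ × ℝ → F) (a b : ℝ) (hu : DifferentiableAt ℝ u (a, b)) :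
    deriv (fun t => u (a, t)) b = fderiv ℝ u (a, b) (0, 1) :=
  (hasDerivAt_fix1 u a b hu).deriv

/-- smoothness of a directional derivative -/
lemma contDiff_fderiv_apply {u : ℝ × ℝ → F} (hu : ContDiff ℝ (⊤ : ℕ∞) u) (v : ℝ × ℝ) :
    ContDiff ℝ (⊤ : ℕ∞) (fun q => fderiv ℝ u q v) := by
  have h1 : ContDiff ℝ (⊤ : ℕ∞) (fderiv ℝ u) := hu.fderiv_right (by simp)
  exact (ContinuousLinearMap.apply ℝ F v).contDiff.comp h1

/-- Clairaut's theorem for smooth functions on the plane -/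
lemma fderiv_swap (u : ℝ × ℝ → F) (hu : ContDiff ℝ (⊤ : ℕ∞) u) (p v w : ℝ × ℝ) :
    fderiv ℝ (fun q => fderiv ℝ u q v) p w = fderiv ℝ (fun q => fderiv ℝ u q w) p v := by
  have hdu : Differentiable ℝ (fderiv ℝ u) :=
    (hu.fderiv_right (m := (⊤ : ℕ∞)) (by simp)).differentiable (by simp)
  have key : ∀ v w : ℝ × ℝ,
      fderiv ℝ (fun q => fderiv ℝ u q v) p w = fderiv ℝ (fderiv ℝ u) p w v := by
    intro v w
    have h1 : HasFDerivAt (fun q => fderiv ℝ u q v)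
        ((ContinuousLinearMap.apply ℝ F v).comp (fderiv ℝ (fderiv ℝ u) p)) p :=
      (ContinuousLinearMap.apply ℝ F v).hasFDerivAt.comp p (hdu p).hasFDerivAt
    rw [h1.fderiv]
    rfl
  rw [key v w, key w v]
  exact second_derivative_symmetric (fun y => (hu.differentiable (by simp) y).hasFDerivAt)
    (hdu p).hasFDerivAt w v

lemma fderiv_mul_apply {u v : ℝ × ℝ → ℝ} {q : ℝ × ℝ} (hu : DifferentiableAt ℝ u q)
    (hv : DifferentiableAt ℝ v q) (w : ℝ × ℝ) :
    fderiv ℝ (fun q => u q * v q) q w = u q * fderiv ℝ v q w + v q * fderiv ℝ u q w := by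
  rw [fderiv_fun_mul hu hv]
  simp [smul_eq_mul]

lemma fderiv_fst_apply {u : ℝ × ℝ → ℝ × ℝ} {q : ℝ × ℝ} (hu : DifferentiableAt ℝ u q)
    (w : ℝ × ℝ) : fderiv ℝ (fun q => (u q).1) q w = (fderiv ℝ u q w).1 := by
  rw [(hu.hasFDerivAt.fst).fderiv]
  rfl

lemma fderiv_snd_apply {u : ℝ × ℝ → ℝ × ℝ} {q : ℝ × ℝ} (hu : DifferentiableAt ℝ u q)
    (w : ℝ × ℝ) : fderiv ℝ (fun q => (u q).2) q w = (fderiv ℝ u q w).2 := by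
  rw [(hu.hasFDerivAt.snd).fderiv]
  rfl

lemma clm_apply_decomp (L : ℝ × ℝ →L[ℝ] ℝ) (w1 w2 : ℝ) :
    L (w1, w2) = w1 * L (1, 0) + w2 * L (0, 1) := by
  have h : ((w1, w2) : ℝ × ℝ) = w1 • ((1:ℝ), (0:ℝ)) + w2 • ((0:ℝ), (1:ℝ)) := by
    simp [Prod.ext_iff]
  rw [h, map_add, L.map_smul, L.map_smul, smul_eq_mul, smul_eq_mul]

/-- partial application of the derivative of a function on `ℝ × (ℝ × ℝ)` -/
lemma fderiv_partial_snd {F2 : ℝ × (ℝ × ℝ) → ℝ} {a : ℝ} {b : ℝ × ℝ}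
    (hF : DifferentiableAt ℝ F2 (a, b)) (w : ℝ × ℝ) :
    fderiv ℝ F2 (a, b) ((0:ℝ), w) = fderiv ℝ (fun y => F2 (a, y)) b w := by
  have hc : HasFDerivAt (fun y : ℝ × ℝ => ((a, y) : ℝ × (ℝ × ℝ)))
      ((0 : (ℝ × ℝ) →L[ℝ] ℝ).prod (ContinuousLinearMap.id ℝ (ℝ × ℝ))) b :=
    (hasFDerivAt_const a b).prodMk (hasFDerivAt_id b)
  have h1 := hF.hasFDerivAt.comp b hc
  have h2 : fderiv ℝ (fun y => F2 (a, y)) b = fderiv ℝ (F2 ∘ Prod.mk a) b := rfl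
  rw [h2, h1.fderiv]
  rfl


/-- integer translates for a monotone lift -/
lemma lift_int (ψ : ℝ → ℝ) (hper : ∀ θ, ψ (θ + 2 * π) = ψ θ + 2 * π) :
    ∀ (m : ℤ) (θ : ℝ), ψ (θ + 2 * π * m) = ψ θ + 2 * π * m := by
  have hneg : ∀ θ, ψ (θ - 2 * π) = ψ θ - 2 * π := by
    intro θ
    have := hper (θ - 2 * π)
    simp only [sub_add_cancel] at this
    linarith
  intro m
  induction m using Int.induction_on with
  | zero => simp
  | succ k ih =>
    intro θ
    have h2 := hper (θ + 2 * π * (k:ℝ))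
    have h3 := ih θ
    push_cast at h3 ⊢
    have h4 : θ + 2 * π * ((k:ℝ) + 1) = (θ + 2 * π * (k:ℝ)) + 2 * π := by ring
    rw [h4, h2]
    linarith [h3]
  | pred k ih =>
    intro θ
    have h2 := hneg (θ + 2 * π * (-(k:ℝ)))
    have h3 := ih θ
    push_cast at h3 ⊢
    have h4 : θ + 2 * π * (-(k:ℝ) - 1) = (θ + 2 * π * (-(k:ℝ))) - 2 * π := by ring
    rw [h4, h2]
    linarith [h3]

lemma key_up (ψ : ℝ → ℝ) (hm : Monotone ψ) (hper : ∀ θ, ψ (θ + 2 * π) = ψ θ + 2 * π)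
    (x : ℝ) : ψ x ≤ ψ 0 + x + 2 * π := by
  have h2π : (0:ℝ) < 2 * π := by positivity
  set m : ℤ := ⌈x / (2 * π)⌉ with hm'
  have hdiv : 2 * π * (x / (2 * π)) = x := by field_simp
  have hx1 : x ≤ 2 * π * m := by
    have h5 := Int.le_ceil (x / (2 * π))
    nlinarith [h5, hdiv, h2π]
  have hx2 : 2 * π * m ≤ x + 2 * π := by
    have h5 : (m:ℝ) < x / (2*π) + 1 := Int.ceil_lt_add_one _
    nlinarith [h5, hdiv, h2π]
  calc ψ x ≤ ψ (2 * π * m) := hm hx1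
  _ = ψ 0 + 2 * π * m := by simpa using lift_int ψ hper m 0
  _ ≤ ψ 0 + x + 2 * π := by linarith

lemma key_down (ψ : ℝ → ℝ) (hm : Monotone ψ) (hper : ∀ θ, ψ (θ + 2 * π) = ψ θ + 2 * π)
    (x : ℝ) : ψ 0 + x - 2 * π ≤ ψ x := by
  have h2π : (0:ℝ) < 2 * π := by positivity
  set m : ℤ := ⌊x / (2 * π)⌋ with hm'
  have hdiv : 2 * π * (x / (2 * π)) = x := by field_simp
  have hx1 : 2 * π * m ≤ x := by
    have h5 := Int.floor_le (x / (2 * π))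
    nlinarith [h5, hdiv, h2π]
  have hx2 : x - 2 * π ≤ 2 * π * m := by
    have h5 : x / (2 * π) < (m:ℝ) + 1 := Int.lt_floor_add_one _
    nlinarith [h5, hdiv, h2π]
  calc ψ 0 + x - 2 * π ≤ ψ 0 + 2 * π * m := by linarith
  _ = ψ (2 * π * m) := by simpa using (lift_int ψ hper m 0).symm
  _ ≤ ψ x := hm hx1

lemma iter_mono (ψ : ℝ → ℝ) (hm : Monotone ψ) (n : ℕ) : Monotone (ψ^[n]) := by
  induction n with
  | zero => simpa using monotone_id
  | succ k ih => rw [Function.iterate_succ]; exact ih.comp hm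

lemma iter_per (ψ : ℝ → ℝ) (hper : ∀ θ, ψ (θ + 2 * π) = ψ θ + 2 * π) (n : ℕ) :
    ∀ θ, ψ^[n] (θ + 2 * π) = ψ^[n] θ + 2 * π := by
  induction n with
  | zero => simp
  | succ k ih =>
    intro θ
    rw [Function.iterate_succ_apply, Function.iterate_succ_apply, hper]
    exact ih (ψ θ)

/-- existence of the translation number -/
lemma translation_number_exists (ψ : ℝ → ℝ) (hm : Monotone ψ)
    (hper : ∀ θ, ψ (θ + 2 * π) = ψ θ + 2 * π) :
    ∃ L : ℝ, Tendsto (fun n : ℕ => ψ^[n] 0 / n) atTop (𝓝 L) := by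
  have h2π : (0:ℝ) < 2 * π := by positivity
  set b : ℕ → ℝ := fun n => ψ^[n] 0 with hb
  have hquasi : ∀ m n : ℕ, b (m + n) ≤ b m + b n + 2 * π := by
    intro m n
    have h1 : b (m + n) = ψ^[m] (ψ^[n] 0) := by
      simp only [hb, Function.iterate_add_apply]
    rw [h1]
    have := key_up (ψ^[m]) (iter_mono ψ hm m) (iter_per ψ hper m) (ψ^[n] 0)
    simpa [hb] using this
  have hsub : Subadditive (fun n => b n + 2 * π) := by
    intro m n
    show b (m + n) + 2 * π ≤ (b m + 2 * π) + (b n + 2 * π)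
    have := hquasi m n
    linarith
  have hlow : ∀ n : ℕ, (n : ℝ) * (ψ 0 - 2 * π) ≤ b n := by
    intro n
    induction n with
    | zero => simp [hb]
    | succ k ih =>
      have h1 : b (k + 1) = ψ^[k] (ψ 0) := by
        simp only [hb, Function.iterate_succ_apply]
      have h2 := key_down (ψ^[k]) (iter_mono ψ hm k) (iter_per ψ hper k) (ψ 0)
      rw [h1]
      push_cast
      have : ψ^[k] 0 + ψ 0 - 2 * π ≤ ψ^[k] (ψ 0) := h2
      have hbk : b k = ψ^[k] 0 := rfl
      nlinarith [ih]
  have hbdd : BddBelow (range fun n : ℕ => (b n + 2 * π) / n) := by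
    refine ⟨min 0 (ψ 0 - 2 * π), ?_⟩
    rintro x ⟨n, rfl⟩
    rcases Nat.eq_zero_or_pos n with h | h
    · subst h; simp
    · have hn : (0:ℝ) < n := by exact_mod_cast h
      have : (n : ℝ) * (ψ 0 - 2 * π) ≤ b n + 2 * π := by
        have := hlow n; linarith
      have : (ψ 0 - 2 * π) ≤ (b n + 2 * π) / n := by
        rw [le_div_iff₀ hn]; linarith [this]
      exact le_trans (min_le_right _ _) this
  have hlim := hsub.tendsto_lim hbdd
  refine ⟨hsub.lim, ?_⟩
  have h0 : Tendsto (fun n : ℕ => (2 * π) / (n:ℝ)) atTop (𝓝 0) :=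
    tendsto_const_div_atTop_nhds_zero_nat (2 * π)
  have : Tendsto (fun n : ℕ => (b n + 2 * π) / n - (2 * π) / n) atTop (𝓝 (hsub.lim - 0)) :=
    hlim.sub h0
  rw [sub_zero] at this
  refine this.congr (fun n => ?_)
  rcases Nat.eq_zero_or_pos n with h | h
  · subst h; simp
  · have hn : (n:ℝ) ≠ 0 := by positivity
    field_simp
    simp [hb]


section Structure

variable {G : ℝ → ℝ × ℝ → ℝ × ℝ} {f : ℝ → ℝ × ℝ → ℝ} {φ : ℝ → ℝ → ℝ}

lemma one_mem_Icc : (1:ℝ) ∈ Icc (0:ℝ) 1 := ⟨zero_le_one, le_rfl⟩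

lemma origin_mem_disk : ((0:ℝ), (0:ℝ)) ∈ disk := by simp [disk]

lemma seg_mem_disk {t : ℝ} (ht : t ∈ Icc (0:ℝ) 1) : ((t, (0:ℝ)) : ℝ × ℝ) ∈ disk := by
  simp only [disk, mem_setOf_eq]
  nlinarith [ht.1, ht.2]

lemma circle_mem_disk (θ : ℝ) : ((Real.cos θ, Real.sin θ) : ℝ × ℝ) ∈ disk := by
  simp only [disk, mem_setOf_eq]
  rw [sq, sq]
  nlinarith [Real.sin_sq_add_cos_sq θ]

lemma g_smooth (hG : IsIsotopy G) : ContDiff ℝ (⊤ : ℕ∞) (G 1) := (hG.2.1 1 one_mem_Icc).1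

lemma g_maps (hG : IsIsotopy G) : MapsTo (G 1) disk disk := (hG.2.1 1 one_mem_Icc).2.1

lemma iter_smooth (hG : IsIsotopy G) (k : ℕ) : ContDiff ℝ (⊤ : ℕ∞) ((G 1)^[k]) := by
  induction k with
  | zero => simpa using contDiff_id
  | succ k ih =>
    rw [Function.iterate_succ']
    exact (g_smooth hG).comp ih

lemma iter_maps (hG : IsIsotopy G) (k : ℕ) : MapsTo ((G 1)^[k]) disk disk := by
  induction k with
  | zero => simpa using mapsTo_id disk
  | succ k ih =>
    rw [Function.iterate_succ']
    exact (g_maps hG).comp ih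

lemma iter_origin (hGo : ∀ t ∈ Icc (0:ℝ) 1, G t (0, 0) = (0, 0)) (k : ℕ) :
    (G 1)^[k] ((0:ℝ), (0:ℝ)) = ((0:ℝ), (0:ℝ)) := by
  induction k with
  | zero => simp
  | succ k ih => rw [Function.iterate_succ_apply', ih, hGo 1 one_mem_Icc]

lemma iter_bdry (hφ : IsBoundaryLift G φ) (k : ℕ) :
    (G 1)^[k] ((1:ℝ), (0:ℝ)) = (Real.cos ((φ 1)^[k] 0), Real.sin ((φ 1)^[k] 0)) := by
  induction k with
  | zero => simp
  | succ k ih =>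
    rw [Function.iterate_succ_apply', ih, hφ.2.2.2 1 one_mem_Icc,
      Function.iterate_succ_apply']

lemma phi_smooth (hφ : IsBoundaryLift G φ) (θ₀ : ℝ) :
    ContDiff ℝ (⊤ : ℕ∞) (fun s => φ s θ₀) :=
  hφ.1.comp (contDiff_id.prodMk contDiff_const)

lemma phi_smooth' (hφ : IsBoundaryLift G φ) (s : ℝ) :
    ContDiff ℝ (⊤ : ℕ∞) (fun θ => φ s θ) :=
  hφ.1.comp (contDiff_const.prodMk contDiff_id)

lemma phi_surj (hφ : IsBoundaryLift G φ) {s : ℝ} (hs : s ∈ Icc (0:ℝ) 1) :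
    Surjective (φ s) := by
  have h2π : (0:ℝ) < 2 * π := by positivity
  have hmono : Monotone (φ s) := (hφ.2.1 s hs).1.monotone
  have hcont : Continuous (φ s) := (phi_smooth' hφ s).continuous
  have hint := lift_int (φ s) (hφ.2.1 s hs).2
  apply hcont.surjective
  · apply tendsto_atTop_atTop_of_monotone hmono
    intro b
    refine ⟨2 * π * ⌈(b - φ s 0) / (2 * π)⌉, ?_⟩
    have h1 : φ s (2 * π * ⌈(b - φ s 0) / (2 * π)⌉) = φ s 0 + 2 * π * ⌈(b - φ s 0) / (2 * π)⌉ := by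
      simpa using hint ⌈(b - φ s 0) / (2 * π)⌉ 0
    rw [h1]
    have h5 := Int.le_ceil ((b - φ s 0) / (2 * π))
    have hdiv : 2 * π * ((b - φ s 0) / (2 * π)) = b - φ s 0 := by field_simp
    nlinarith [h5, hdiv, h2π]
  · apply tendsto_atBot_atBot_of_monotone hmono
    intro b
    refine ⟨2 * π * ⌊(b - φ s 0) / (2 * π)⌋, ?_⟩
    have h1 : φ s (2 * π * ⌊(b - φ s 0) / (2 * π)⌋) = φ s 0 + 2 * π * ⌊(b - φ s 0) / (2 * π)⌋ := by
      simpa using hint ⌊(b - φ s 0) / (2 * π)⌋ 0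
    rw [h1]
    have h5 := Int.floor_le ((b - φ s 0) / (2 * π))
    have hdiv : 2 * π * ((b - φ s 0) / (2 * π)) = b - φ s 0 := by field_simp
    nlinarith [h5, hdiv, h2π]

/-- the Hamiltonian is constant on the boundary circle -/
lemma f_bdry_const (hf : IsHam G f) (hφ : IsBoundaryLift G φ)
    {s : ℝ} (hs : s ∈ Ioo (0:ℝ) 1) (θ : ℝ) :
    f s (Real.cos θ, Real.sin θ) = f s (1, 0) := by
  have hsIcc : s ∈ Icc (0:ℝ) 1 := ⟨hs.1.le, hs.2.le⟩
  have hfs : ContDiff ℝ (⊤ : ℕ∞) (fun p : ℝ × ℝ => f s p) :=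
    hf.1.comp (contDiff_const.prodMk contDiff_id)
  have hcurve : Differentiable ℝ (fun θ : ℝ => (Real.cos θ, Real.sin θ)) :=
    Real.differentiable_cos.prodMk Real.differentiable_sin
  have hc_diff : Differentiable ℝ (fun θ => f s (Real.cos θ, Real.sin θ)) := by
    intro θ
    exact DifferentiableAt.comp θ (hfs.differentiable (by simp) _) (hcurve θ)
  have hderiv0 : ∀ θ, deriv (fun θ => f s (Real.cos θ, Real.sin θ)) θ = 0 := by
    intro θ
    obtain ⟨θ₀, hθ₀⟩ := phi_surj hφ hsIcc θ
    have hp₀ : ((Real.cos θ₀, Real.sin θ₀) : ℝ × ℝ) ∈ disk := circle_mem_disk θ₀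
    have hGs : G s (Real.cos θ₀, Real.sin θ₀) = (Real.cos θ, Real.sin θ) := by
      rw [hφ.2.2.2 s hsIcc θ₀, hθ₀]
    -- the time derivative of the boundary trajectory
    have hq : ContDiff ℝ (⊤ : ℕ∞) (fun s' => φ s' θ₀) := phi_smooth hφ θ₀
    set q' := deriv (fun s' => φ s' θ₀) s with hq'
    have hqd : HasDerivAt (fun s' => φ s' θ₀) q' s :=
      ((hq.differentiable (by simp)) s).hasDerivAt
    have hcurve2 : HasDerivAt (fun s' => ((Real.cos (φ s' θ₀), Real.sin (φ s' θ₀)) : ℝ × ℝ))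
        ((-Real.sin (φ s θ₀) * q', Real.cos (φ s θ₀) * q')) s := (hqd.cos).prodMk (hqd.sin)
    have hev : (fun s' => G s' (Real.cos θ₀, Real.sin θ₀)) =ᶠ[𝓝 s]
        (fun s' => ((Real.cos (φ s' θ₀), Real.sin (φ s' θ₀)) : ℝ × ℝ)) := by
      filter_upwards [Ioo_mem_nhds hs.1 hs.2] with s' hs'
      exact hφ.2.2.2 s' ⟨hs'.1.le, hs'.2.le⟩ θ₀
    have hder : deriv (fun s' => G s' (Real.cos θ₀, Real.sin θ₀)) s =
        ((-Real.sin θ * q', Real.cos θ * q') : ℝ × ℝ) := by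
      rw [hev.deriv_eq, hcurve2.deriv, hθ₀]
    have hham := hf.2 s hsIcc (Real.cos θ₀, Real.sin θ₀) hp₀
    rw [hGs, hder] at hham
    have hpdx : pdx (f s) (Real.cos θ, Real.sin θ) = -(Real.cos θ * q') := hham.1
    have hpdy : pdy (f s) (Real.cos θ, Real.sin θ) = -Real.sin θ * q' := hham.2
    -- the derivative of f along the circle
    have hcc : HasDerivAt (fun θ : ℝ => ((Real.cos θ, Real.sin θ) : ℝ × ℝ))
        ((-Real.sin θ, Real.cos θ)) θ := (Real.hasDerivAt_cos θ).prodMk (Real.hasDerivAt_sin θ)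
    have hcd : HasDerivAt (fun θ => f s (Real.cos θ, Real.sin θ))
        (fderiv ℝ (f s) (Real.cos θ, Real.sin θ) (-Real.sin θ, Real.cos θ)) θ :=
      (hfs.differentiable (by simp) _).hasFDerivAt.comp_hasDerivAt θ hcc
    rw [hcd.deriv, clm_apply_decomp]
    have e1 : fderiv ℝ (f s) (Real.cos θ, Real.sin θ) (1, 0) = -(Real.cos θ * q') := hpdx
    have e2 : fderiv ℝ (f s) (Real.cos θ, Real.sin θ) (0, 1) = -Real.sin θ * q' := hpdy
    rw [e1, e2]
    ring
  have := is_const_of_deriv_eq_zero hc_diff hderiv0 θ 0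
  simpa using this

end Structure

/-- Green's theorem computation: the central identity. `Γ` is a smooth family of paths,
`F` the (uncurried) Hamiltonian. -/
lemma green (Γ : ℝ × ℝ → ℝ × ℝ) (F : ℝ × (ℝ × ℝ) → ℝ)
    (hΓ : ContDiff ℝ (⊤ : ℕ∞) Γ) (hF : ContDiff ℝ (⊤ : ℕ∞) F)
    (ham : ∀ s t : ℝ, s ∈ Icc (0:ℝ) 1 → t ∈ Icc (0:ℝ) 1 →
      fderiv ℝ (fun y => F (s, y)) (Γ (s,t)) (1,0) = -(fderiv ℝ Γ (s,t) (1,0)).2 ∧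
      fderiv ℝ (fun y => F (s, y)) (Γ (s,t)) (0,1) = (fderiv ℝ Γ (s,t) (1,0)).1) :
    ((∫ t in (0:ℝ)..1, ((Γ (1,t)).1 * fderiv ℝ (fun q => (Γ q).2) (1,t) (0,1)
        - (Γ (1,t)).2 * fderiv ℝ (fun q => (Γ q).1) (1,t) (0,1)))
      - ∫ t in (0:ℝ)..1, ((Γ (0,t)).1 * fderiv ℝ (fun q => (Γ q).2) (0,t) (0,1)
        - (Γ (0,t)).2 * fderiv ℝ (fun q => (Γ q).1) (0,t) (0,1)))
    = (∫ s in (0:ℝ)..1, (2 * F (s, Γ (s,1))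
        + ((Γ (s,1)).1 * fderiv ℝ (fun q => (Γ q).2) (s,1) (1,0)
          - (Γ (s,1)).2 * fderiv ℝ (fun q => (Γ q).1) (s,1) (1,0))))
      - ∫ s in (0:ℝ)..1, (2 * F (s, Γ (s,0))
        + ((Γ (s,0)).1 * fderiv ℝ (fun q => (Γ q).2) (s,0) (1,0)
          - (Γ (s,0)).2 * fderiv ℝ (fun q => (Γ q).1) (s,0) (1,0))) := by
  set A : ℝ × ℝ → ℝ := fun q => (Γ q).1 with hA_def
  set B : ℝ × ℝ → ℝ := fun q => (Γ q).2 with hB_def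
  have hA : ContDiff ℝ (⊤ : ℕ∞) A := hΓ.fst
  have hB : ContDiff ℝ (⊤ : ℕ∞) B := hΓ.snd
  have hDtA : ContDiff ℝ (⊤ : ℕ∞) (fun q => fderiv ℝ A q (0,1)) := contDiff_fderiv_apply hA _
  have hDtB : ContDiff ℝ (⊤ : ℕ∞) (fun q => fderiv ℝ B q (0,1)) := contDiff_fderiv_apply hB _
  have hDsA : ContDiff ℝ (⊤ : ℕ∞) (fun q => fderiv ℝ A q (1,0)) := contDiff_fderiv_apply hA _
  have hDsB : ContDiff ℝ (⊤ : ℕ∞) (fun q => fderiv ℝ B q (1,0)) := contDiff_fderiv_apply hB _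
  set W : ℝ × ℝ → ℝ := fun q => A q * fderiv ℝ B q (0,1) - B q * fderiv ℝ A q (0,1)
    with hW_def
  set Z : ℝ × ℝ → ℝ := fun q => 2 * F (q.1, Γ q)
    + (A q * fderiv ℝ B q (1,0) - B q * fderiv ℝ A q (1,0)) with hZ_def
  have hFt : ContDiff ℝ (⊤ : ℕ∞) (fun q : ℝ × ℝ => F (q.1, Γ q)) :=
    hF.comp (contDiff_fst.prodMk hΓ)
  have hW : ContDiff ℝ (⊤ : ℕ∞) W := (hA.mul hDtB).sub (hB.mul hDtA)
  have hZc : ContDiff ℝ (⊤ : ℕ∞) Z := (contDiff_const.mul hFt).add ((hA.mul hDsB).sub (hB.mul hDsA))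
  have dΓ : ∀ q, DifferentiableAt ℝ Γ q := fun q => hΓ.differentiable (by simp) q
  -- components of the full derivative of Γ
  have hcompA : ∀ (q : ℝ × ℝ) (v : ℝ × ℝ), fderiv ℝ A q v = (fderiv ℝ Γ q v).1 := by
    intro q v; rw [hA_def]; exact fderiv_fst_apply (dΓ q) v
  have hcompB : ∀ (q : ℝ × ℝ) (v : ℝ × ℝ), fderiv ℝ B q v = (fderiv ℝ Γ q v).2 := by
    intro q v; rw [hB_def]; exact fderiv_snd_apply (dΓ q) v
  -- the chain rule for the Hamiltonian term
  have hchain : ∀ s t : ℝ, s ∈ Icc (0:ℝ) 1 → t ∈ Icc (0:ℝ) 1 →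
      fderiv ℝ (fun q : ℝ × ℝ => F (q.1, Γ q)) (s,t) (0,1)
      = fderiv ℝ A (s,t) (1,0) * fderiv ℝ B (s,t) (0,1)
        - fderiv ℝ B (s,t) (1,0) * fderiv ℝ A (s,t) (0,1) := by
    intro s t hs ht
    have hm : HasFDerivAt (fun q : ℝ × ℝ => ((q.1, Γ q) : ℝ × (ℝ × ℝ)))
        ((ContinuousLinearMap.fst ℝ ℝ ℝ).prod (fderiv ℝ Γ (s,t))) (s,t) :=
      hasFDerivAt_fst.prodMk (dΓ (s,t)).hasFDerivAt
    have hcomp : HasFDerivAt (fun q : ℝ × ℝ => F (q.1, Γ q))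
        ((fderiv ℝ F ((s, Γ (s,t)) : ℝ × (ℝ × ℝ))).comp
          ((ContinuousLinearMap.fst ℝ ℝ ℝ).prod (fderiv ℝ Γ (s,t)))) (s,t) :=
      (hF.differentiable (by simp) ((s, Γ (s,t)) : ℝ × (ℝ × ℝ))).hasFDerivAt.comp (s,t) hm
    rw [hcomp.fderiv]
    have h1 : ((fderiv ℝ F ((s, Γ (s,t)) : ℝ × (ℝ × ℝ))).comp
        ((ContinuousLinearMap.fst ℝ ℝ ℝ).prod (fderiv ℝ Γ (s,t)))) ((0:ℝ),(1:ℝ))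
        = fderiv ℝ F ((s, Γ (s,t)) : ℝ × (ℝ × ℝ)) ((0:ℝ), fderiv ℝ Γ (s,t) (0,1)) := rfl
    rw [h1]
    have h2 : fderiv ℝ Γ (s,t) ((0:ℝ),(1:ℝ))
        = (fderiv ℝ A (s,t) ((0:ℝ),(1:ℝ)), fderiv ℝ B (s,t) ((0:ℝ),(1:ℝ))) := by
      rw [hcompA, hcompB]
    rw [h2, fderiv_partial_snd (hF.differentiable (by simp) _) _, clm_apply_decomp,
      (ham s t hs ht).1, (ham s t hs ht).2]
    simp only [hcompA, hcompB]
    ring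
  -- the divergence of (W, -Z) vanishes on the unit square
  have hdiv : ∀ s t : ℝ, s ∈ Icc (0:ℝ) 1 → t ∈ Icc (0:ℝ) 1 →
      fderiv ℝ W (s,t) (1,0) + fderiv ℝ (fun q => -Z q) (s,t) (0,1) = 0 := by
    intro s t hs ht
    have dA : DifferentiableAt ℝ A (s,t) := hA.differentiable (by simp) _
    have dB : DifferentiableAt ℝ B (s,t) := hB.differentiable (by simp) _
    have dDtA : DifferentiableAt ℝ (fun q => fderiv ℝ A q (0,1)) (s,t) :=
      hDtA.differentiable (by simp) _
    have dDtB : DifferentiableAt ℝ (fun q => fderiv ℝ B q (0,1)) (s,t) :=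
      hDtB.differentiable (by simp) _
    have dDsA : DifferentiableAt ℝ (fun q => fderiv ℝ A q (1,0)) (s,t) :=
      hDsA.differentiable (by simp) _
    have dDsB : DifferentiableAt ℝ (fun q => fderiv ℝ B q (1,0)) (s,t) :=
      hDsB.differentiable (by simp) _
    have dFt : DifferentiableAt ℝ (fun q : ℝ × ℝ => F (q.1, Γ q)) (s,t) :=
      hFt.differentiable (by simp) _
    have eW : fderiv ℝ W (s,t) ((1:ℝ),(0:ℝ))
        = A (s,t) * fderiv ℝ (fun q => fderiv ℝ B q (0,1)) (s,t) (1,0)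
          + fderiv ℝ B (s,t) (0,1) * fderiv ℝ A (s,t) (1,0)
          - (B (s,t) * fderiv ℝ (fun q => fderiv ℝ A q (0,1)) (s,t) (1,0)
          + fderiv ℝ A (s,t) (0,1) * fderiv ℝ B (s,t) (1,0)) := by
      rw [hW_def]
      rw [fderiv_fun_sub (dA.fun_mul dDtB) (dB.fun_mul dDtA)]
      rw [ContinuousLinearMap.sub_apply]
      rw [fderiv_mul_apply dA dDtB, fderiv_mul_apply dB dDtA]
    have eZ : fderiv ℝ Z (s,t) ((0:ℝ),(1:ℝ))
        = 2 * fderiv ℝ (fun q : ℝ × ℝ => F (q.1, Γ q)) (s,t) (0,1)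
          + (A (s,t) * fderiv ℝ (fun q => fderiv ℝ B q (1,0)) (s,t) (0,1)
          + fderiv ℝ B (s,t) (1,0) * fderiv ℝ A (s,t) (0,1)
          - (B (s,t) * fderiv ℝ (fun q => fderiv ℝ A q (1,0)) (s,t) (0,1)
          + fderiv ℝ A (s,t) (1,0) * fderiv ℝ B (s,t) (0,1))) := by
      rw [hZ_def]
      rw [fderiv_fun_add (by exact (contDiff_const.mul hFt).differentiable (by simp) _)
        (by exact ((hA.mul hDsB).sub (hB.mul hDsA)).differentiable (by simp) _)]
      rw [ContinuousLinearMap.add_apply]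
      rw [fderiv_const_mul dFt, ContinuousLinearMap.smul_apply, smul_eq_mul]
      rw [fderiv_fun_sub (dA.fun_mul dDsB) (dB.fun_mul dDsA), ContinuousLinearMap.sub_apply]
      rw [fderiv_mul_apply dA dDsB, fderiv_mul_apply dB dDsA]
    have eneg : fderiv ℝ (fun q => -Z q) (s,t) ((0:ℝ),(1:ℝ)) = -fderiv ℝ Z (s,t) ((0:ℝ),(1:ℝ)) := by
      rw [fderiv_fun_neg]; rfl
    rw [eneg, eW, eZ, hchain s t hs ht]
    rw [fderiv_swap B hB (s,t) ((0:ℝ),(1:ℝ)) ((1:ℝ),(0:ℝ)),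
      fderiv_swap A hA (s,t) ((0:ℝ),(1:ℝ)) ((1:ℝ),(0:ℝ))]
    ring
  -- apply the divergence theorem on the unit square
  have key := integral2_divergence_prod_of_hasFDerivAt_off_countable W (fun q => -Z q)
    (fun q => fderiv ℝ W q) (fun q => fderiv ℝ (fun q' => -Z q') q) 0 0 1 1 ∅ countable_empty
    (hW.continuous.continuousOn) ((hZc.neg).continuous.continuousOn)
    (fun x _ => (hW.differentiable (by simp) x).hasFDerivAt)
    (fun x _ => ((hZc.neg).differentiable (by simp) x).hasFDerivAt) ?_
  · -- now use `key`
    have hIcc : Set.uIcc (0:ℝ) 1 = Icc (0:ℝ) 1 := uIcc_of_le zero_le_one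
    have hLHS : (∫ s in (0:ℝ)..1, ∫ t in (0:ℝ)..1,
        (fderiv ℝ W (s,t) (1,0) + fderiv ℝ (fun q' => -Z q') (s,t) (0,1))) = 0 := by
      rw [intervalIntegral.integral_congr (g := fun _ => (0:ℝ))]
      · simp
      · intro s hs
        rw [hIcc] at hs
        beta_reduce
        rw [intervalIntegral.integral_congr (g := fun _ => (0:ℝ))]
        · simp
        · intro t ht
          rw [hIcc] at ht
          beta_reduce
          exact hdiv s t hs ht
    rw [hLHS] at key
    -- translate the right-hand side
    have e1 : (∫ s in (0:ℝ)..1, (fun q => -Z q) (s, (1:ℝ)))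
        = -∫ s in (0:ℝ)..1, Z (s, 1) := by
      simp [intervalIntegral.integral_neg]
    have e2 : (∫ s in (0:ℝ)..1, (fun q => -Z q) (s, (0:ℝ)))
        = -∫ s in (0:ℝ)..1, Z (s, 0) := by
      simp [intervalIntegral.integral_neg]
    rw [e1, e2] at key
    -- key : 0 = ((-∫ Z(s,1)) - (-∫ Z(s,0)) + ∫ W(1,t)) - ∫ W(0,t)
    have hgoal : (∫ t in (0:ℝ)..1, W (1, t)) - (∫ t in (0:ℝ)..1, W (0, t))
        = (∫ s in (0:ℝ)..1, Z (s, 1)) - ∫ s in (0:ℝ)..1, Z (s, 0) := by linarith [key.symm]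
    -- identify with the stated integrals
    have wq : ∀ a t : ℝ, W (a, t) = (Γ (a,t)).1 * fderiv ℝ (fun q => (Γ q).2) (a,t) (0,1)
        - (Γ (a,t)).2 * fderiv ℝ (fun q => (Γ q).1) (a,t) (0,1) := by
      intro a t; rw [hW_def]
    have zq : ∀ s a : ℝ, Z (s, a) = 2 * F (s, Γ (s,a))
        + ((Γ (s,a)).1 * fderiv ℝ (fun q => (Γ q).2) (s,a) (1,0)
          - (Γ (s,a)).2 * fderiv ℝ (fun q => (Γ q).1) (s,a) (1,0)) := by
      intro s a; rw [hZ_def]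
    exact hgoal
  · -- integrability of the (vanishing) divergence
    apply IntegrableOn.congr_fun (integrableOn_zero)
    · intro x hx
      obtain ⟨hx1, hx2⟩ := hx
      rw [uIcc_of_le (zero_le_one (α := ℝ))] at hx1 hx2
      exact (hdiv x.1 x.2 hx1 hx2).symm
    · exact (measurableSet_uIcc.prod measurableSet_uIcc)


section Step
variable {G : ℝ → ℝ × ℝ → ℝ × ℝ} {f : ℝ → ℝ × ℝ → ℝ} {φ : ℝ → ℝ → ℝ}

lemma ae_Ioo_of_uIoc : ∀ᵐ x : ℝ ∂(volume : Measure ℝ), x ∈ Set.uIoc (0:ℝ) 1 → x ∈ Ioo (0:ℝ) 1 := by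
  have h1 : ∀ᵐ x : ℝ ∂(volume : Measure ℝ), x ∉ ({1} : Set ℝ) :=
    measure_eq_zero_iff_ae_notMem.mp (measure_singleton 1)
  filter_upwards [h1] with x hx hxI
  rw [uIoc_of_le (zero_le_one (α := ℝ))] at hxI
  exact ⟨hxI.1, lt_of_le_of_ne hxI.2 (by simpa using hx)⟩

lemma step_main (hG : IsIsotopy G) (hGo : ∀ t ∈ Icc (0:ℝ) 1, G t (0, 0) = (0, 0))
    (hf : IsHam G f) (hf0 : ∀ t ∈ Icc (0:ℝ) 1, f t (0, 0) = 0)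
    (hφ : IsBoundaryLift G φ) (k : ℕ) :
    sigmaQ ((G 1)^[k+1]) = sigmaQ ((G 1)^[k]) + (∫ t in (0:ℝ)..1, f t (1, 0))
      + ((φ 1)^[k+1] 0 - (φ 1)^[k] 0) / 2 := by
  set P : ℝ → ℝ × ℝ := fun t => (G 1)^[k] (t, 0) with hP_def
  have hPsm : ContDiff ℝ (⊤ : ℕ∞) P := (iter_smooth hG k).comp (contDiff_id.prodMk contDiff_const)
  set Γ : ℝ × ℝ → ℝ × ℝ := fun q => G q.1 (P q.2) with hΓ_def
  have hΓsm : ContDiff ℝ (⊤ : ℕ∞) Γ := hG.1.comp (contDiff_fst.prodMk (hPsm.comp contDiff_snd))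
  set F : ℝ × (ℝ × ℝ) → ℝ := fun a => f a.1 a.2 with hF_def
  have hFsm : ContDiff ℝ (⊤ : ℕ∞) F := hf.1
  -- the Hamiltonian condition in the form needed by `green`
  have hger : ∀ s t : ℝ, s ∈ Icc (0:ℝ) 1 → t ∈ Icc (0:ℝ) 1 →
      fderiv ℝ (fun y => F (s, y)) (Γ (s,t)) (1,0) = -(fderiv ℝ Γ (s,t) (1,0)).2 ∧
      fderiv ℝ (fun y => F (s, y)) (Γ (s,t)) (0,1) = (fderiv ℝ Γ (s,t) (1,0)).1 := by
    intro s t hs ht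
    have hpt : P t ∈ disk := iter_maps hG k (seg_mem_disk ht)
    have hham := hf.2 s hs (P t) hpt
    have hder : deriv (fun s' => G s' (P t)) s = fderiv ℝ Γ (s,t) (1,0) :=
      (hasDerivAt_fix2 Γ s t (hΓsm.differentiable (by simp) _)).deriv
    constructor
    · have e1 : fderiv ℝ (fun y => F (s, y)) (Γ (s,t)) ((1:ℝ),(0:ℝ))
          = pdx (f s) (G s (P t)) := rfl
      rw [e1, hham.1, hder]
    · have e1 : fderiv ℝ (fun y => F (s, y)) (Γ (s,t)) ((0:ℝ),(1:ℝ))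
          = pdy (f s) (G s (P t)) := rfl
      rw [e1, hham.2, hder]
  have key := green Γ F hΓsm hFsm hger
  -- Evaluate the four boundary integrals
  have eA : (∫ t in (0:ℝ)..1, ((Γ (1,t)).1 * fderiv ℝ (fun q => (Γ q).2) (1,t) (0,1)
        - (Γ (1,t)).2 * fderiv ℝ (fun q => (Γ q).1) (1,t) (0,1)))
      = 2 * sigmaQ ((G 1)^[k+1]) := by
    have hh : ContDiff ℝ (⊤ : ℕ∞) ((G 1)^[k+1]) := iter_smooth hG (k+1)
    have ept : ∀ t : ℝ, ((Γ (1,t)).1 * fderiv ℝ (fun q => (Γ q).2) (1,t) (0,1)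
          - (Γ (1,t)).2 * fderiv ℝ (fun q => (Γ q).1) (1,t) (0,1))
        = ((((G 1)^[k+1]) (t,0)).1 * pdx (fun q => (((G 1)^[k+1]) q).2) (t,0)
          - (((G 1)^[k+1]) (t,0)).2 * pdx (fun q => (((G 1)^[k+1]) q).1) (t,0)) := by
      intro t
      have h1 : Γ (1,t) = ((G 1)^[k+1]) (t,0) := by
        simp only [hΓ_def, hP_def, Function.iterate_succ_apply']
      have h2 : fderiv ℝ (fun q => (Γ q).2) (1,t) ((0:ℝ),(1:ℝ))
          = pdx (fun q => (((G 1)^[k+1]) q).2) (t,0) := by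
        have d1 : DifferentiableAt ℝ (fun q : ℝ × ℝ => (Γ q).2) (1,t) :=
          (hΓsm.snd).differentiable (by simp) _
        have d2 : DifferentiableAt ℝ (fun p : ℝ × ℝ => (((G 1)^[k+1]) p).2) (t,0) :=
          (hh.snd).differentiable (by simp) _
        have e2 : pdx (fun q => (((G 1)^[k+1]) q).2) (t,0)
            = deriv (fun t' => ((((G 1)^[k+1]) (t',0))).2) t := (deriv_fix2 _ t 0 d2).symm
        rw [e2, ← deriv_fix1 _ 1 t d1]
        congr 1
        funext t'
        simp only [hΓ_def, hP_def, Function.iterate_succ_apply']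
      have h3 : fderiv ℝ (fun q => (Γ q).1) (1,t) ((0:ℝ),(1:ℝ))
          = pdx (fun q => (((G 1)^[k+1]) q).1) (t,0) := by
        have d1 : DifferentiableAt ℝ (fun q : ℝ × ℝ => (Γ q).1) (1,t) :=
          (hΓsm.fst).differentiable (by simp) _
        have d2 : DifferentiableAt ℝ (fun p : ℝ × ℝ => (((G 1)^[k+1]) p).1) (t,0) :=
          (hh.fst).differentiable (by simp) _
        have e2 : pdx (fun q => (((G 1)^[k+1]) q).1) (t,0)
            = deriv (fun t' => ((((G 1)^[k+1]) (t',0))).1) t := (deriv_fix2 _ t 0 d2).symm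
        rw [e2, ← deriv_fix1 _ 1 t d1]
        congr 1
        funext t'
        simp only [hΓ_def, hP_def, Function.iterate_succ_apply']
      rw [h1, h2, h3]
    rw [intervalIntegral.integral_congr (fun t _ => ept t)]
    rw [sigmaQ]
    ring
  have eB : (∫ t in (0:ℝ)..1, ((Γ (0,t)).1 * fderiv ℝ (fun q => (Γ q).2) (0,t) (0,1)
        - (Γ (0,t)).2 * fderiv ℝ (fun q => (Γ q).1) (0,t) (0,1)))
      = 2 * sigmaQ ((G 1)^[k]) := by
    have hh : ContDiff ℝ (⊤ : ℕ∞) ((G 1)^[k]) := iter_smooth hG k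
    have ept : ∀ t ∈ Ioo (0:ℝ) 1, ((Γ (0,t)).1 * fderiv ℝ (fun q => (Γ q).2) (0,t) (0,1)
          - (Γ (0,t)).2 * fderiv ℝ (fun q => (Γ q).1) (0,t) (0,1))
        = ((((G 1)^[k]) (t,0)).1 * pdx (fun q => (((G 1)^[k]) q).2) (t,0)
          - (((G 1)^[k]) (t,0)).2 * pdx (fun q => (((G 1)^[k]) q).1) (t,0)) := by
      intro t ht
      have hid : ∀ t' ∈ Icc (0:ℝ) 1, Γ (0,t') = ((G 1)^[k]) (t',0) := by
        intro t' ht'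
        have : P t' ∈ disk := iter_maps hG k (seg_mem_disk ht')
        simp only [hΓ_def]
        exact hG.2.2 (P t') this
      have hev : (fun t' => (Γ (0,t')).2) =ᶠ[𝓝 t] (fun t' => ((((G 1)^[k]) (t',0))).2) := by
        filter_upwards [Ioo_mem_nhds ht.1 ht.2] with t' ht'
        rw [hid t' ⟨ht'.1.le, ht'.2.le⟩]
      have hev1 : (fun t' => (Γ (0,t')).1) =ᶠ[𝓝 t] (fun t' => ((((G 1)^[k]) (t',0))).1) := by
        filter_upwards [Ioo_mem_nhds ht.1 ht.2] with t' ht'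
        rw [hid t' ⟨ht'.1.le, ht'.2.le⟩]
      have d1 : DifferentiableAt ℝ (fun q : ℝ × ℝ => (Γ q).2) (0,t) :=
        (hΓsm.snd).differentiable (by simp) _
      have d1' : DifferentiableAt ℝ (fun q : ℝ × ℝ => (Γ q).1) (0,t) :=
        (hΓsm.fst).differentiable (by simp) _
      have d2 : DifferentiableAt ℝ (fun p : ℝ × ℝ => (((G 1)^[k]) p).2) (t,0) :=
        (hh.snd).differentiable (by simp) _
      have d2' : DifferentiableAt ℝ (fun p : ℝ × ℝ => (((G 1)^[k]) p).1) (t,0) :=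
        (hh.fst).differentiable (by simp) _
      have h2 : fderiv ℝ (fun q => (Γ q).2) (0,t) ((0:ℝ),(1:ℝ))
          = pdx (fun q => (((G 1)^[k]) q).2) (t,0) := by
        rw [← deriv_fix1 _ 0 t d1, hev.deriv_eq]
        exact deriv_fix2 _ t 0 d2
      have h3 : fderiv ℝ (fun q => (Γ q).1) (0,t) ((0:ℝ),(1:ℝ))
          = pdx (fun q => (((G 1)^[k]) q).1) (t,0) := by
        rw [← deriv_fix1 _ 0 t d1', hev1.deriv_eq]
        exact deriv_fix2 _ t 0 d2'
      rw [hid t ⟨ht.1.le, ht.2.le⟩, h2, h3]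
    have hae : ∀ᵐ x : ℝ ∂(volume : Measure ℝ), x ∈ Set.uIoc (0:ℝ) 1 →
        ((Γ (0,x)).1 * fderiv ℝ (fun q => (Γ q).2) (0,x) (0,1)
          - (Γ (0,x)).2 * fderiv ℝ (fun q => (Γ q).1) (0,x) (0,1))
        = ((((G 1)^[k]) (x,0)).1 * pdx (fun q => (((G 1)^[k]) q).2) (x,0)
          - (((G 1)^[k]) (x,0)).2 * pdx (fun q => (((G 1)^[k]) q).1) (x,0)) := by
      filter_upwards [ae_Ioo_of_uIoc] with x hx hxI
      exact ept x (hx hxI)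
    rw [intervalIntegral.integral_congr_ae hae]
    rw [sigmaQ]
    ring
  have eD : (∫ s in (0:ℝ)..1, (2 * F (s, Γ (s,0))
        + ((Γ (s,0)).1 * fderiv ℝ (fun q => (Γ q).2) (s,0) (1,0)
          - (Γ (s,0)).2 * fderiv ℝ (fun q => (Γ q).1) (s,0) (1,0))))
      = 0 := by
    have ept : ∀ s ∈ Set.uIcc (0:ℝ) 1, (2 * F (s, Γ (s,0))
        + ((Γ (s,0)).1 * fderiv ℝ (fun q => (Γ q).2) (s,0) (1,0)
          - (Γ (s,0)).2 * fderiv ℝ (fun q => (Γ q).1) (s,0) (1,0))) = (0:ℝ) := by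
      intro s hs
      rw [uIcc_of_le (zero_le_one (α := ℝ))] at hs
      have hΓ0 : Γ (s,0) = ((0:ℝ), (0:ℝ)) := by
        simp only [hΓ_def, hP_def]
        rw [iter_origin hGo k, hGo s hs]
      rw [hΓ0]
      have : F (s, ((0:ℝ),(0:ℝ))) = 0 := by
        simp only [hF_def]
        exact hf0 s hs
      rw [this]
      simp
    rw [intervalIntegral.integral_congr ept]
    simp
  have eC : (∫ s in (0:ℝ)..1, (2 * F (s, Γ (s,1))
        + ((Γ (s,1)).1 * fderiv ℝ (fun q => (Γ q).2) (s,1) (1,0)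
          - (Γ (s,1)).2 * fderiv ℝ (fun q => (Γ q).1) (s,1) (1,0))))
      = 2 * (∫ t in (0:ℝ)..1, f t (1, 0)) + ((φ 1)^[k+1] 0 - (φ 1)^[k] 0) := by
    set θk : ℝ := (φ 1)^[k] 0 with hθk_def
    set qk : ℝ → ℝ := fun s => φ s θk with hqk_def
    have hqksm : ContDiff ℝ (⊤ : ℕ∞) qk := phi_smooth hφ θk
    have hP1 : P 1 = (Real.cos θk, Real.sin θk) := by
      simp only [hP_def]
      exact iter_bdry hφ k
    have hΓs1 : ∀ s' ∈ Icc (0:ℝ) 1, Γ (s',1) = (Real.cos (qk s'), Real.sin (qk s')) := by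
      intro s' hs'
      simp only [hΓ_def, hP1, hqk_def]
      exact hφ.2.2.2 s' hs' θk
    have ept : ∀ s ∈ Ioo (0:ℝ) 1, (2 * F (s, Γ (s,1))
        + ((Γ (s,1)).1 * fderiv ℝ (fun q => (Γ q).2) (s,1) (1,0)
          - (Γ (s,1)).2 * fderiv ℝ (fun q => (Γ q).1) (s,1) (1,0)))
        = 2 * f s (1,0) + deriv qk s := by
      intro s hs
      have hsIcc : s ∈ Icc (0:ℝ) 1 := ⟨hs.1.le, hs.2.le⟩
      have hqd : HasDerivAt qk (deriv qk s) s :=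
        ((hqksm.differentiable (by simp)) s).hasDerivAt
      have hΓv : Γ (s,1) = (Real.cos (qk s), Real.sin (qk s)) := hΓs1 s hsIcc
      have hFv : F (s, Γ (s,1)) = f s (1,0) := by
        rw [hΓv]
        simp only [hF_def]
        exact f_bdry_const hf hφ hs (qk s)
      have hev2 : (fun s' => (Γ (s',1)).2) =ᶠ[𝓝 s] (fun s' => Real.sin (qk s')) := by
        filter_upwards [Ioo_mem_nhds hs.1 hs.2] with s' hs'
        rw [hΓs1 s' ⟨hs'.1.le, hs'.2.le⟩]
      have hev1 : (fun s' => (Γ (s',1)).1) =ᶠ[𝓝 s] (fun s' => Real.cos (qk s')) := by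
        filter_upwards [Ioo_mem_nhds hs.1 hs.2] with s' hs'
        rw [hΓs1 s' ⟨hs'.1.le, hs'.2.le⟩]
      have d1 : DifferentiableAt ℝ (fun q : ℝ × ℝ => (Γ q).2) (s,1) :=
        (hΓsm.snd).differentiable (by simp) _
      have d1' : DifferentiableAt ℝ (fun q : ℝ × ℝ => (Γ q).1) (s,1) :=
        (hΓsm.fst).differentiable (by simp) _
      have h2 : fderiv ℝ (fun q => (Γ q).2) (s,1) ((1:ℝ),(0:ℝ))
          = Real.cos (qk s) * deriv qk s := by
        rw [← deriv_fix2 _ s 1 d1, hev2.deriv_eq]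
        exact (hqd.sin).deriv
      have h3 : fderiv ℝ (fun q => (Γ q).1) (s,1) ((1:ℝ),(0:ℝ))
          = -Real.sin (qk s) * deriv qk s := by
        rw [← deriv_fix2 _ s 1 d1', hev1.deriv_eq]
        exact (hqd.cos).deriv
      rw [hFv, hΓv, h2, h3]
      have hpy : Real.sin (qk s) ^ 2 + Real.cos (qk s) ^ 2 = 1 := Real.sin_sq_add_cos_sq _
      linear_combination (deriv qk s) * hpy
    have hae : ∀ᵐ x : ℝ ∂(volume : Measure ℝ), x ∈ Set.uIoc (0:ℝ) 1 →
        (2 * F (x, Γ (x,1))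
        + ((Γ (x,1)).1 * fderiv ℝ (fun q => (Γ q).2) (x,1) (1,0)
          - (Γ (x,1)).2 * fderiv ℝ (fun q => (Γ q).1) (x,1) (1,0)))
        = 2 * f x (1,0) + deriv qk x := by
      filter_upwards [ae_Ioo_of_uIoc] with x hx hxI
      exact ept x (hx hxI)
    rw [intervalIntegral.integral_congr_ae hae]
    have hcont1 : Continuous (fun s => f s ((1:ℝ), (0:ℝ))) :=
      (hf.1.comp (contDiff_id.prodMk contDiff_const)).continuous
    have hcont2 : Continuous (deriv qk) := hqksm.continuous_deriv (by simp)
    rw [intervalIntegral.integral_add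
      (((continuous_const.fun_mul hcont1)).intervalIntegrable 0 1)
      (hcont2.intervalIntegrable 0 1)]
    rw [intervalIntegral.integral_const_mul]
    rw [intervalIntegral.integral_deriv_eq_sub
      (fun x _ => (hqksm.differentiable (by simp)).differentiableAt)
      (hcont2.intervalIntegrable 0 1)]
    have hq1 : qk 1 = (φ 1)^[k+1] 0 := by
      simp only [hqk_def, hθk_def]
      rw [Function.iterate_succ_apply']
    have hq0 : qk 0 = θk := by
      simp only [hqk_def]
      exact hφ.2.2.1 θk
    rw [hq1, hq0]
  rw [eA, eB, eC, eD] at key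
  linarith [key]

end Step

lemma sigmaQ_id : sigmaQ ((fun p : ℝ × ℝ => p)) = 0 := by
  rw [sigmaQ]
  have h : ∀ t ∈ Set.uIcc (0:ℝ) 1,
      ((((fun p : ℝ × ℝ => p)) ((t,(0:ℝ)))).1
          * pdx (fun q : ℝ × ℝ => (((fun p : ℝ × ℝ => p)) q).2) (t,0)
        - (((fun p : ℝ × ℝ => p)) ((t,(0:ℝ)))).2
          * pdx (fun q : ℝ × ℝ => (((fun p : ℝ × ℝ => p)) q).1) (t,0)) = (0:ℝ) := by
    intro t _
    have e1 : pdx (fun q : ℝ × ℝ => q.2) ((t,(0:ℝ))) = 0 := by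
      show fderiv ℝ (Prod.snd) ((t,(0:ℝ)) : ℝ × ℝ) (1, 0) = 0
      rw [fderiv_snd]
      rfl
    simp only []
    rw [e1]
    ring
  rw [intervalIntegral.integral_congr h]
  simp


end Statement13

open Statement13 in
/-- for a smooth isotopy `(g_t)` in `G_o` with `g_0 = id`,
Hamiltonians `f_t` normalized by `f_t(0,0) = 0`, `S((g_t)) = ∫₀¹ f_t(1,0) dt`,
and the lift `φ̃` of the boundary isotopy with `φ̃_0 = id`, the limit
`σ̄(g₁) = lim_n σ(g₁ⁿ)/n` exists and `σ̄(g₁) - S((g_t)) = π rot̃(φ̃₁)`, where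
`rot̃(φ̃₁) = lim_n φ̃₁ⁿ(0)/(2πn)` is the translation number. -/
theorem sigma_homogenized_sub_S_eq_translation_number
    (G : ℝ → ℝ × ℝ → ℝ × ℝ) (f : ℝ → ℝ × ℝ → ℝ) (φ : ℝ → ℝ → ℝ)
    (hG : IsIsotopy G) (hGo : ∀ t ∈ Icc (0:ℝ) 1, G t (0, 0) = (0, 0))
    (hf : IsHam G f) (hf0 : ∀ t ∈ Icc (0:ℝ) 1, f t (0, 0) = 0)
    (hφ : IsBoundaryLift G φ) :
    ∃ Sg r : ℝ,
      Tendsto (fun n : ℕ => sigmaQ (G 1)^[n] / (n : ℝ)) atTop (𝓝 Sg) ∧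
      Tendsto (fun n : ℕ => (φ 1)^[n] 0 / (2 * π * n)) atTop (𝓝 r) ∧
      Sg - (∫ t in (0:ℝ)..1, f t (1, 0)) = π * r := by
  obtain ⟨L, hL⟩ := translation_number_exists (φ 1) (hφ.2.1 1 one_mem_Icc).1.monotone
    (hφ.2.1 1 one_mem_Icc).2
  set S : ℝ := ∫ t in (0:ℝ)..1, f t (1, 0) with hS_def
  have hiter : ∀ n : ℕ, sigmaQ ((G 1)^[n]) = n * S + (φ 1)^[n] 0 / 2 := by
    intro n
    induction n with
    | zero =>
      have h1 : sigmaQ ((G 1)^[0]) = 0 := by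
        rw [Function.iterate_zero]
        exact sigmaQ_id
      rw [h1]
      simp
    | succ k ih =>
      rw [step_main hG hGo hf hf0 hφ k, ih]
      push_cast
      ring
  refine ⟨S + L / 2, L * (1 / (2 * π)), ?_, ?_, ?_⟩
  · have h1 : Tendsto (fun n : ℕ => S + (1/2) * ((φ 1)^[n] 0 / n)) atTop
        (𝓝 (S + (1/2) * L)) := tendsto_const_nhds.add (hL.const_mul (1/2))
    have h2 : S + (1/2) * L = S + L / 2 := by ring
    rw [h2] at h1
    apply h1.congr'
    filter_upwards [eventually_ge_atTop 1] with n hn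
    have hn' : (n : ℝ) ≠ 0 := by
      have : (0:ℕ) < n := hn
      positivity
    rw [hiter n]
    field_simp
  · have h2 := hL.mul_const (1 / (2 * π))
    apply h2.congr
    intro n
    rw [mul_comm (2 * π) ((n:ℝ)), ← div_div ((φ 1)^[n] 0) ((n:ℝ)) (2*π)]
    exact (div_eq_mul_one_div _ _).symm
  · have hπ : π ≠ 0 := Real.pi_ne_zero
    field_simp
    ring
end
end

section
/- Let F : D → ℝ be a C^∞ function and let η = λ + dF, a 1-form with dη = ω. Then sup_{g ∈ Symp(D)} |τ_η(g) − τ_λ(g)| < ∞; that is, τ_η − τ_λ is a bounded function on Symp(D). Consequently τ_η is a quasi-morphism whenever τ_λ is, and the homogenizations of τ_η and τ_λ coincide. -/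
open MeasureTheory Filter Topology Set Function Real

noncomputable section

/-- `τ_η(g) = ∫_D g*η ∧ η` for the primitive `η = λ + dF` of `ω`, in
coordinates: `η₁ = -y/2 + ∂F/∂x`, `η₂ = x/2 + ∂F/∂y`. -/
def tauEta (F : ℝ × ℝ → ℝ) (g : ℝ × ℝ → ℝ × ℝ) : ℝ :=
  ∫ p in disk,
    (((-(g p).2 / 2 + pdx F (g p)) * pdx (fun q => (g q).1) p +
        ((g p).1 / 2 + pdy F (g p)) * pdx (fun q => (g q).2) p) *
          (p.1 / 2 + pdy F p) -
     ((-(g p).2 / 2 + pdx F (g p)) * pdy (fun q => (g q).1) p +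
        ((g p).1 / 2 + pdy F (g p)) * pdy (fun q => (g q).2) p) *
          (-p.2 / 2 + pdx F p))

lemma isClosed_disk : IsClosed disk :=
  isClosed_le (by fun_prop) continuous_const

lemma measurableSet_disk : MeasurableSet disk := isClosed_disk.measurableSet

lemma disk_subset_ball : disk ⊆ Metric.closedBall (0 : ℝ × ℝ) 1 := by
  intro p hp
  have hp' : p.1 ^ 2 + p.2 ^ 2 ≤ 1 := hp
  simp only [Metric.mem_closedBall, dist_zero_right, Prod.norm_def, Real.norm_eq_abs,
    sup_le_iff]
  constructor <;> rw [abs_le] <;> constructor <;> nlinarith [sq_nonneg p.1, sq_nonneg p.2]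

lemma isCompact_disk : IsCompact disk :=
  (isCompact_closedBall _ _).of_isClosed_subset isClosed_disk disk_subset_ball

lemma volume_disk_lt_top : volume disk < ⊤ := isCompact_disk.measure_lt_top

lemma fderiv_apply_pd (f : ℝ × ℝ → ℝ) (p : ℝ × ℝ) (v : ℝ × ℝ) :
    fderiv ℝ f p v = v.1 * pdx f p + v.2 * pdy f p := by
  have : v = v.1 • ((1:ℝ), (0:ℝ)) + v.2 • ((0:ℝ), (1:ℝ)) := by simp
  rw [this, (fderiv ℝ f p).map_add, (fderiv ℝ f p).map_smul, (fderiv ℝ f p).map_smul]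
  simp [pdx, pdy, smul_eq_mul]

lemma cont_pdx {f : ℝ × ℝ → ℝ} (hf : ContDiff ℝ (⊤ : ℕ∞) f) : Continuous (pdx f) :=
  (hf.continuous_fderiv (by simp)).clm_apply continuous_const

lemma cont_pdy {f : ℝ × ℝ → ℝ} (hf : ContDiff ℝ (⊤ : ℕ∞) f) : Continuous (pdy f) :=
  (hf.continuous_fderiv (by simp)).clm_apply continuous_const

lemma hasDerivAt_comp2 {f : ℝ × ℝ → ℝ} (hf : ContDiff ℝ (⊤ : ℕ∞) f) {c : ℝ → ℝ × ℝ}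
    {c' : ℝ × ℝ} {t : ℝ} (hc : HasDerivAt c c' t) :
    HasDerivAt (fun s => f (c s)) (c'.1 * pdx f (c t) + c'.2 * pdy f (c t)) t := by
  have h := ((hf.differentiable (by simp)) (c t)).hasFDerivAt.comp_hasDerivAt t hc
  rw [fderiv_apply_pd] at h
  exact h

/-- the polar coordinates map. -/
def polmap (q : ℝ × ℝ) : ℝ × ℝ := (q.1 * Real.cos q.2, q.1 * Real.sin q.2)

lemma cont_polmap : Continuous polmap := by unfold polmap; fun_prop

lemma setIntegral_disk_polar (f : ℝ × ℝ → ℝ) :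
    ∫ p in disk, f p = ∫ q in Ioc (0:ℝ) 1 ×ˢ Ioo (-π) π, q.1 * f (polmap q) := by
  have h := integral_comp_polarCoord_symm (Set.indicator disk f)
  rw [integral_indicator measurableSet_disk] at h
  rw [← h]
  have hmeas : MeasurableSet {q : ℝ × ℝ | polmap q ∈ disk} :=
    (isClosed_disk.preimage cont_polmap).measurableSet
  have hsymm : ∀ q : ℝ × ℝ, polarCoord.symm q = polmap q := fun q => by
    rw [polarCoord_symm_apply]; rfl
  have h1 : (fun q : ℝ × ℝ => q.1 • Set.indicator disk f (polarCoord.symm q)) =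
      Set.indicator {q : ℝ × ℝ | polmap q ∈ disk} (fun q => q.1 * f (polmap q)) := by
    funext q
    rw [hsymm]
    by_cases hq : polmap q ∈ disk
    · rw [Set.indicator_of_mem (show q ∈ {q : ℝ × ℝ | polmap q ∈ disk} from hq),
        Set.indicator_of_mem hq]
      simp [smul_eq_mul]
    · rw [Set.indicator_of_notMem (show q ∉ {q : ℝ × ℝ | polmap q ∈ disk} from hq),
        Set.indicator_of_notMem hq]
      simp
  rw [h1, setIntegral_indicator hmeas]
  have hset : polarCoord.target ∩ {q : ℝ × ℝ | polmap q ∈ disk} =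
      Ioc (0:ℝ) 1 ×ˢ Ioo (-π) π := by
    have htarget : polarCoord.target = Ioi (0:ℝ) ×ˢ Ioo (-π) π := rfl
    rw [htarget]
    ext q
    obtain ⟨r, θ⟩ := q
    simp only [Set.mem_inter_iff, Set.mem_prod, Set.mem_Ioi, Set.mem_Ioo, Set.mem_Ioc,
      Set.mem_setOf_eq]
    constructor
    · rintro ⟨⟨hr, hθ⟩, hd⟩
      have hd' : (r * Real.cos θ) ^ 2 + (r * Real.sin θ) ^ 2 ≤ 1 := hd
      have key : (r * Real.cos θ) ^ 2 + (r * Real.sin θ) ^ 2 = r ^ 2 := by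
        linear_combination r ^ 2 * Real.sin_sq_add_cos_sq θ
      exact ⟨⟨hr, by nlinarith⟩, hθ⟩
    · rintro ⟨⟨hr, hr1⟩, hθ⟩
      refine ⟨⟨hr, hθ⟩, ?_⟩
      show (r * Real.cos θ) ^ 2 + (r * Real.sin θ) ^ 2 ≤ 1
      have key : (r * Real.cos θ) ^ 2 + (r * Real.sin θ) ^ 2 = r ^ 2 := by
        linear_combination r ^ 2 * Real.sin_sq_add_cos_sq θ
      nlinarith
  rw [hset]

-- Green's theorem on the unit disk
theorem green {P Q : ℝ × ℝ → ℝ} (hP : ContDiff ℝ (⊤ : ℕ∞) P) (hQ : ContDiff ℝ (⊤ : ℕ∞) Q) :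
    ∫ p in disk, (pdx Q p - pdy P p) =
      ∫ θ in (-π)..π,
        (Q (Real.cos θ, Real.sin θ) * Real.cos θ - P (Real.cos θ, Real.sin θ) * Real.sin θ) := by
  have hPc := hP.continuous
  have hQc := hQ.continuous
  have hPx := cont_pdx hP
  have hPy := cont_pdy hP
  have hQx := cont_pdx hQ
  have hQy := cont_pdy hQ
  set s : Set ℝ := Ioc (0:ℝ) 1 with hs_def
  set t : Set ℝ := Ioo (-π) π with ht_def
  -- the two auxiliary functions
  set Bf : ℝ × ℝ → ℝ := fun q =>
    q.1 * (Q (polmap q) * Real.cos q.2 - P (polmap q) * Real.sin q.2) with hBf_def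
  set Af : ℝ × ℝ → ℝ := fun q =>
    P (polmap q) * Real.cos q.2 + Q (polmap q) * Real.sin q.2 with hAf_def
  set dB : ℝ × ℝ → ℝ := fun q =>
    (Q (polmap q) * Real.cos q.2 - P (polmap q) * Real.sin q.2) +
      q.1 * ((pdx Q (polmap q) * Real.cos q.2 + pdy Q (polmap q) * Real.sin q.2) * Real.cos q.2
        - (pdx P (polmap q) * Real.cos q.2 + pdy P (polmap q) * Real.sin q.2) * Real.sin q.2)
    with hdB_def
  set dA : ℝ × ℝ → ℝ := fun q =>
    ((pdx P (polmap q) * (-(q.1 * Real.sin q.2)) + pdy P (polmap q) * (q.1 * Real.cos q.2)) *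
        Real.cos q.2 - P (polmap q) * Real.sin q.2) +
      ((pdx Q (polmap q) * (-(q.1 * Real.sin q.2)) + pdy Q (polmap q) * (q.1 * Real.cos q.2)) *
        Real.sin q.2 + Q (polmap q) * Real.cos q.2) with hdA_def
  -- continuity
  have hcont_dB : Continuous dB := by
    rw [hdB_def]; unfold polmap; fun_prop
  have hcont_dA : Continuous dA := by
    rw [hdA_def]; unfold polmap; fun_prop
  -- derivative in r of Bf
  have hBr : ∀ θ r : ℝ, HasDerivAt (fun r' => Bf (r', θ)) (dB (r, θ)) r := by
    intro θ r
    have hc : HasDerivAt (fun r' : ℝ => ((r' * Real.cos θ, r' * Real.sin θ) : ℝ × ℝ))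
        (Real.cos θ, Real.sin θ) r := by
      apply HasDerivAt.prodMk
      · simpa using (hasDerivAt_id r).mul_const (Real.cos θ)
      · simpa using (hasDerivAt_id r).mul_const (Real.sin θ)
    have hQr := hasDerivAt_comp2 hQ hc
    have hPr := hasDerivAt_comp2 hP hc
    have h1 : HasDerivAt (fun r' : ℝ => Q (polmap (r', θ)) * Real.cos θ -
        P (polmap (r', θ)) * Real.sin θ)
        (((Real.cos θ) * pdx Q (polmap (r, θ)) + (Real.sin θ) * pdy Q (polmap (r, θ))) *
          Real.cos θ -
         ((Real.cos θ) * pdx P (polmap (r, θ)) + (Real.sin θ) * pdy P (polmap (r, θ))) *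
          Real.sin θ) r := by
      exact (hQr.mul_const _).sub (hPr.mul_const _)
    have h2 := (hasDerivAt_id r).mul h1
    rw [hdB_def]
    refine h2.congr_deriv ?_
    simp only [polmap, id]
    ring
  -- derivative in θ of Af
  have hAθ : ∀ r θ : ℝ, HasDerivAt (fun θ' => Af (r, θ')) (dA (r, θ)) θ := by
    intro r θ
    have hc : HasDerivAt (fun θ' : ℝ => ((r * Real.cos θ', r * Real.sin θ') : ℝ × ℝ))
        (-(r * Real.sin θ), r * Real.cos θ) θ := by
      apply HasDerivAt.prodMk
      · simpa [mul_comm, neg_mul, mul_neg] using (Real.hasDerivAt_cos θ).const_mul r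
      · simpa using (Real.hasDerivAt_sin θ).const_mul r
    have hPθ := hasDerivAt_comp2 hP hc
    have hQθ := hasDerivAt_comp2 hQ hc
    have h1 := (hPθ.mul (Real.hasDerivAt_cos θ)).add (hQθ.mul (Real.hasDerivAt_sin θ))
    rw [hdA_def]
    refine h1.congr_deriv ?_
    simp only [polmap]
    ring
  -- the key pointwise identity
  have key : ∀ q : ℝ × ℝ, q.1 * (pdx Q (polmap q) - pdy P (polmap q)) = dB q - dA q := by
    intro q
    rw [hdB_def, hdA_def]
    simp only []
    linear_combination (-(q.1 * (pdx Q (polmap q) - pdy P (polmap q)))) *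
      Real.sin_sq_add_cos_sq q.2
  -- integrability on the product set
  have hsub : s ×ˢ t ⊆ Icc ((0:ℝ), -π) ((1:ℝ), π) := by
    rw [Icc_prod_eq]
    exact Set.prod_mono Set.Ioc_subset_Icc_self Set.Ioo_subset_Icc_self
  have hIcc : IsCompact (Icc ((0:ℝ), -π) ((1:ℝ), π)) := isCompact_Icc
  have hinteg : ∀ {f : ℝ × ℝ → ℝ}, Continuous f → IntegrableOn f (s ×ˢ t) := by
    intro f hf
    exact (hf.continuousOn.integrableOn_compact hIcc).mono_set hsub
  have hms : MeasurableSet s := measurableSet_Ioc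
  have hmt : MeasurableSet t := measurableSet_Ioo
  -- the measure rewriting
  have hprodmeas : (volume : Measure (ℝ × ℝ)).restrict (s ×ˢ t) =
      (volume.restrict s).prod (volume.restrict t) := by
    rw [Measure.prod_restrict, ← Measure.volume_eq_prod]
  have hcontint : Continuous fun q : ℝ × ℝ => q.1 * (pdx Q (polmap q) - pdy P (polmap q)) := by
    unfold polmap; fun_prop
  have hpile : (-π : ℝ) ≤ π := by linarith [Real.pi_pos]
  -- step 1: polar coordinates
  rw [setIntegral_disk_polar]
  -- step 2: split into dB and dA integrals
  have hsplit : ∫ q in s ×ˢ t, q.1 * (pdx Q (polmap q) - pdy P (polmap q)) =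
      (∫ q in s ×ˢ t, dB q) - ∫ q in s ×ˢ t, dA q := by
    rw [← integral_sub (hinteg hcont_dB) (hinteg hcont_dA)]
    exact setIntegral_congr_fun (hms.prod hmt) fun q _ => key q
  rw [hsplit]
  -- step 3: the dA integral vanishes
  have hIntA : Integrable dA ((volume.restrict s).prod (volume.restrict t)) := by
    rw [← hprodmeas]; exact hinteg hcont_dA
  have hIntB : Integrable dB ((volume.restrict s).prod (volume.restrict t)) := by
    rw [← hprodmeas]; exact hinteg hcont_dB
  have hdA_int : ∫ q in s ×ˢ t, dA q = 0 := by
    have h1 : ∫ q in s ×ˢ t, dA q =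
        ∫ r, (∫ θ, dA (r, θ) ∂(volume.restrict t)) ∂(volume.restrict s) := by
      rw [show ∫ q in s ×ˢ t, dA q = ∫ q, dA q ∂((volume.restrict s).prod (volume.restrict t))
        from by rw [← hprodmeas]]
      exact integral_prod dA hIntA
    rw [h1]
    have h2 : ∀ r : ℝ, ∫ θ in t, dA (r, θ) = 0 := by
      intro r
      have hftc : ∫ θ in (-π)..π, dA (r, θ) = Af (r, π) - Af (r, -π) := by
        apply intervalIntegral.integral_eq_sub_of_hasDerivAt (fun θ _ => hAθ r θ)
        exact (hcont_dA.comp (Continuous.prodMk_right r)).intervalIntegrable _ _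
      have h0 : Af (r, π) - Af (r, -π) = 0 := by
        rw [hAf_def]; simp [polmap]
      rw [ht_def, ← MeasureTheory.integral_Ioc_eq_integral_Ioo,
        ← intervalIntegral.integral_of_le hpile, hftc, h0]
    calc ∫ r, (∫ θ, dA (r, θ) ∂(volume.restrict t)) ∂(volume.restrict s)
        = ∫ _r, (0:ℝ) ∂(volume.restrict s) := by
          congr 1; funext r; exact h2 r
      _ = 0 := integral_zero _ _
  -- step 4: the dB integral
  have hdB_int : ∫ q in s ×ˢ t, dB q = ∫ θ in t, Bf (1, θ) := by
    have h1 : ∫ q in s ×ˢ t, dB q =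
        ∫ θ, (∫ r, dB (r, θ) ∂(volume.restrict s)) ∂(volume.restrict t) := by
      rw [show ∫ q in s ×ˢ t, dB q = ∫ q, dB q ∂((volume.restrict s).prod (volume.restrict t))
        from by rw [← hprodmeas]]
      exact integral_prod_symm dB hIntB
    rw [h1]
    congr 1
    funext θ
    have hftc : ∫ r in (0:ℝ)..1, dB (r, θ) = Bf (1, θ) - Bf (0, θ) := by
      apply intervalIntegral.integral_eq_sub_of_hasDerivAt (fun r _ => hBr θ r)
      exact (hcont_dB.comp (continuous_id.prodMk continuous_const)).intervalIntegrable _ _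
    have h0 : Bf (0, θ) = 0 := by rw [hBf_def]; simp
    rw [hs_def, ← intervalIntegral.integral_of_le (zero_le_one), hftc, h0, sub_zero]
  rw [hdA_int, hdB_int, sub_zero, ht_def, ← MeasureTheory.integral_Ioc_eq_integral_Ioo,
    ← intervalIntegral.integral_of_le hpile]
  congr 1
  funext θ
  rw [hBf_def]
  simp [polmap]

lemma contDiff_pdx {f : ℝ × ℝ → ℝ} (hf : ContDiff ℝ (⊤ : ℕ∞) f) : ContDiff ℝ (⊤ : ℕ∞) (pdx f) :=
  (hf.fderiv_right (by simp)).clm_apply contDiff_const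

lemma contDiff_pdy {f : ℝ × ℝ → ℝ} (hf : ContDiff ℝ (⊤ : ℕ∞) f) : ContDiff ℝ (⊤ : ℕ∞) (pdy f) :=
  (hf.fderiv_right (by simp)).clm_apply contDiff_const

lemma pd_comm {F : ℝ × ℝ → ℝ} (hF : ContDiff ℝ (⊤ : ℕ∞) F) (p : ℝ × ℝ) :
    pdx (pdy F) p = pdy (pdx F) p := by
  have hsymm : IsSymmSndFDerivAt ℝ F p :=
    (hF.contDiffAt (x := p)).isSymmSndFDerivAt (by simp only [minSmoothness_of_isRCLikeNormedField]; show (((2 : ℕ∞)) : WithTop ℕ∞) ≤ ((⊤ : ℕ∞) : WithTop ℕ∞); exact WithTop.coe_le_coe.mpr le_top)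
  have hdF : DifferentiableAt ℝ (fderiv ℝ F) p :=
    ((hF.fderiv_right (m := 1) (by show (((1 + 1 : ℕ) : ℕ∞) : WithTop ℕ∞) ≤ ((⊤ : ℕ∞) : WithTop ℕ∞); exact WithTop.coe_le_coe.mpr le_top)).differentiable one_ne_zero) p
  have h1 : ∀ v : ℝ × ℝ, HasFDerivAt (fun q => fderiv ℝ F q v)
      ((ContinuousLinearMap.apply ℝ ℝ v).comp (fderiv ℝ (fderiv ℝ F) p)) p := fun v =>
    ((ContinuousLinearMap.apply ℝ ℝ v).hasFDerivAt).comp p hdF.hasFDerivAt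
  have hx : pdx (pdy F) p = fderiv ℝ (fderiv ℝ F) p (1, 0) (0, 1) := by
    unfold pdx pdy
    rw [(h1 (0, 1)).fderiv]
    rfl
  have hy : pdy (pdx F) p = fderiv ℝ (fderiv ℝ F) p (0, 1) (1, 0) := by
    unfold pdx pdy
    rw [(h1 (1, 0)).fderiv]
    rfl
  rw [hx, hy, hsymm.eq]

lemma pdx_mul {f g : ℝ × ℝ → ℝ} {p : ℝ × ℝ} (hf : DifferentiableAt ℝ f p)
    (hg : DifferentiableAt ℝ g p) :
    pdx (fun q => f q * g q) p = pdx f p * g p + f p * pdx g p := by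
  unfold pdx
  rw [fderiv_fun_mul hf hg]
  simp [smul_eq_mul]
  ring

lemma pdy_mul {f g : ℝ × ℝ → ℝ} {p : ℝ × ℝ} (hf : DifferentiableAt ℝ f p)
    (hg : DifferentiableAt ℝ g p) :
    pdy (fun q => f q * g q) p = pdy f p * g p + f p * pdy g p := by
  unfold pdy
  rw [fderiv_fun_mul hf hg]
  simp [smul_eq_mul]
  ring

lemma pdy_neg {f : ℝ × ℝ → ℝ} {p : ℝ × ℝ} :
    pdy (fun q => -(f q)) p = -pdy f p := by
  unfold pdy; rw [fderiv_fun_neg]; rfl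

lemma pdx_fst {p : ℝ × ℝ} : pdx (fun q : ℝ × ℝ => q.1) p = 1 := by
  unfold pdx
  rw [show (fun q : ℝ × ℝ => q.1) = Prod.fst from rfl, fderiv_fst]
  rfl

lemma pdy_fst {p : ℝ × ℝ} : pdy (fun q : ℝ × ℝ => q.1) p = 0 := by
  unfold pdy
  rw [show (fun q : ℝ × ℝ => q.1) = Prod.fst from rfl, fderiv_fst]
  rfl

lemma pdx_snd {p : ℝ × ℝ} : pdx (fun q : ℝ × ℝ => q.2) p = 0 := by
  unfold pdx
  rw [show (fun q : ℝ × ℝ => q.2) = Prod.snd from rfl, fderiv_snd]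
  rfl

lemma pdy_snd {p : ℝ × ℝ} : pdy (fun q : ℝ × ℝ => q.2) p = 1 := by
  unfold pdy
  rw [show (fun q : ℝ × ℝ => q.2) = Prod.snd from rfl, fderiv_snd]
  rfl

lemma integrableOn_disk {f : ℝ × ℝ → ℝ} (hf : Continuous f) : IntegrableOn f disk :=
  hf.continuousOn.integrableOn_compact isCompact_disk

/-- Radial Stokes formula on the disk. -/
lemma green_radial {h : ℝ × ℝ → ℝ} (hh : ContDiff ℝ (⊤ : ℕ∞) h) :
    ∫ p in disk, (p.1 * pdx h p + p.2 * pdy h p) =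
      (∫ θ in (-π)..π, h (Real.cos θ, Real.sin θ)) - 2 * ∫ p in disk, h p := by
  have hdh := hh.differentiable (by simp)
  have hQsm : ContDiff ℝ (⊤ : ℕ∞) (fun p : ℝ × ℝ => p.1 * h p) := (contDiff_fst.mul hh)
  have hPsm : ContDiff ℝ (⊤ : ℕ∞) (fun p : ℝ × ℝ => -(p.2 * h p)) := (contDiff_snd.mul hh).neg
  have hg := green hPsm hQsm
  have hpt : ∀ p : ℝ × ℝ, pdx (fun p : ℝ × ℝ => p.1 * h p) p -
      pdy (fun p : ℝ × ℝ => -(p.2 * h p)) p =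
      2 * h p + (p.1 * pdx h p + p.2 * pdy h p) := by
    intro p
    rw [show (fun p : ℝ × ℝ => -(p.2 * h p)) = (fun p : ℝ × ℝ => -((fun q : ℝ × ℝ => q.2 * h q) p)) from rfl,
      pdy_neg, pdx_mul (differentiableAt_fst) (hdh p), pdy_mul (differentiableAt_snd) (hdh p),
      pdx_fst, pdy_snd]
    ring
  have hL : ∫ p in disk, (pdx (fun p : ℝ × ℝ => p.1 * h p) p -
      pdy (fun p : ℝ × ℝ => -(p.2 * h p)) p) =
      2 * (∫ p in disk, h p) + ∫ p in disk, (p.1 * pdx h p + p.2 * pdy h p) := by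
    rw [setIntegral_congr_fun measurableSet_disk fun p _ => hpt p]
    have h1 : IntegrableOn (fun p : ℝ × ℝ => 2 * h p) disk :=
      integrableOn_disk (by fun_prop)
    have h2 : IntegrableOn (fun p : ℝ × ℝ => p.1 * pdx h p + p.2 * pdy h p) disk := by
      apply integrableOn_disk
      have := cont_pdx hh; have := cont_pdy hh
      fun_prop
    rw [integral_add h1 h2, integral_const_mul]
  have hR : ∫ θ in (-π)..π,
      ((fun p : ℝ × ℝ => p.1 * h p) (Real.cos θ, Real.sin θ) * Real.cos θ -
        (fun p : ℝ × ℝ => -(p.2 * h p)) (Real.cos θ, Real.sin θ) * Real.sin θ) =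
      ∫ θ in (-π)..π, h (Real.cos θ, Real.sin θ) := by
    apply intervalIntegral.integral_congr
    intro θ _
    have hsc := Real.sin_sq_add_cos_sq θ
    simp only []
    linear_combination h (Real.cos θ, Real.sin θ) * hsc
  rw [hL, hR] at hg
  linarith [hg]

/-- Curl Stokes formula on the disk: `∫_D d(h dF) = ∮ h dF`. -/
lemma green_curl {h F : ℝ × ℝ → ℝ} (hh : ContDiff ℝ (⊤ : ℕ∞) h) (hF : ContDiff ℝ (⊤ : ℕ∞) F) :
    ∫ p in disk, (pdx h p * pdy F p - pdy h p * pdx F p) =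
      ∫ θ in (-π)..π, h (Real.cos θ, Real.sin θ) *
        (pdy F (Real.cos θ, Real.sin θ) * Real.cos θ -
         pdx F (Real.cos θ, Real.sin θ) * Real.sin θ) := by
  have hdh := hh.differentiable (by simp)
  have hFx := contDiff_pdx hF
  have hFy := contDiff_pdy hF
  have hPsm : ContDiff ℝ (⊤ : ℕ∞) (fun p : ℝ × ℝ => h p * pdx F p) := hh.mul hFx
  have hQsm : ContDiff ℝ (⊤ : ℕ∞) (fun p : ℝ × ℝ => h p * pdy F p) := hh.mul hFy
  have hg := green hPsm hQsm
  have hpt : ∀ p : ℝ × ℝ, pdx (fun p : ℝ × ℝ => h p * pdy F p) p -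
      pdy (fun p : ℝ × ℝ => h p * pdx F p) p =
      pdx h p * pdy F p - pdy h p * pdx F p := by
    intro p
    rw [pdx_mul (hdh p) ((hFy.differentiable (by simp)) p),
      pdy_mul (hdh p) ((hFx.differentiable (by simp)) p), pd_comm hF p]
    ring
  rw [setIntegral_congr_fun measurableSet_disk (fun p _ => hpt p)] at hg
  rw [hg]
  apply intervalIntegral.integral_congr
  intro θ _
  simp only []
  ring

lemma fderiv_comp_fst {g : ℝ × ℝ → ℝ × ℝ} {p : ℝ × ℝ} (hg : DifferentiableAt ℝ g p)
    (v : ℝ × ℝ) : fderiv ℝ (fun q => (g q).1) p v = (fderiv ℝ g p v).1 := by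
  have h : (fun q => (g q).1) = Prod.fst ∘ g := rfl
  rw [h, fderiv_comp p differentiableAt_fst hg, fderiv_fst]
  rfl

lemma fderiv_comp_snd {g : ℝ × ℝ → ℝ × ℝ} {p : ℝ × ℝ} (hg : DifferentiableAt ℝ g p)
    (v : ℝ × ℝ) : fderiv ℝ (fun q => (g q).2) p v = (fderiv ℝ g p v).2 := by
  have h : (fun q => (g q).2) = Prod.snd ∘ g := rfl
  rw [h, fderiv_comp p differentiableAt_snd hg, fderiv_snd]
  rfl

lemma pdx_comp {F : ℝ × ℝ → ℝ} {g : ℝ × ℝ → ℝ × ℝ} {p : ℝ × ℝ}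
    (hF : DifferentiableAt ℝ F (g p)) (hg : DifferentiableAt ℝ g p) :
    pdx (fun q => F (g q)) p =
      pdx F (g p) * pdx (fun q => (g q).1) p + pdy F (g p) * pdx (fun q => (g q).2) p := by
  have h : (fun q => F (g q)) = F ∘ g := rfl
  unfold pdx
  rw [h, fderiv_comp p hF hg]
  simp only [ContinuousLinearMap.coe_comp', Function.comp_apply]
  rw [fderiv_apply_pd, fderiv_comp_fst hg, fderiv_comp_snd hg]
  unfold pdx pdy
  ring

lemma pdy_comp {F : ℝ × ℝ → ℝ} {g : ℝ × ℝ → ℝ × ℝ} {p : ℝ × ℝ}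
    (hF : DifferentiableAt ℝ F (g p)) (hg : DifferentiableAt ℝ g p) :
    pdy (fun q => F (g q)) p =
      pdx F (g p) * pdy (fun q => (g q).1) p + pdy F (g p) * pdy (fun q => (g q).2) p := by
  have h : (fun q => F (g q)) = F ∘ g := rfl
  unfold pdy
  rw [h, fderiv_comp p hF hg]
  simp only [ContinuousLinearMap.coe_comp', Function.comp_apply]
  rw [fderiv_apply_pd, fderiv_comp_fst hg, fderiv_comp_snd hg]
  unfold pdx pdy
  ring

lemma clm_det_eq_jacDet {g : ℝ × ℝ → ℝ × ℝ} {p : ℝ × ℝ} (hg : DifferentiableAt ℝ g p) :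
    (fderiv ℝ g p).det = jacDet g p := by
  have hdet := LinearMap.det_toMatrix (Module.Basis.finTwoProd ℝ) ((fderiv ℝ g p) : (ℝ × ℝ) →ₗ[ℝ] (ℝ × ℝ))
  rw [ContinuousLinearMap.det, ← hdet, Matrix.det_fin_two]
  have hentry : ∀ i j : Fin 2,
      (LinearMap.toMatrix (Module.Basis.finTwoProd ℝ) (Module.Basis.finTwoProd ℝ)
        ((fderiv ℝ g p) : (ℝ × ℝ) →ₗ[ℝ] (ℝ × ℝ))) i j =
      (Module.Basis.finTwoProd ℝ).repr (fderiv ℝ g p ((Module.Basis.finTwoProd ℝ) j)) i := by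
    intro i j
    rw [LinearMap.toMatrix_apply]
    rfl
  rw [hentry, hentry, hentry, hentry]
  simp only [Module.Basis.finTwoProd_zero, Module.Basis.finTwoProd_one, Module.Basis.coe_finTwoProd_repr]
  unfold jacDet pdx pdy
  rw [fderiv_comp_fst hg, fderiv_comp_fst hg, fderiv_comp_snd hg, fderiv_comp_snd hg]
  simp [Matrix.cons_val_zero, Matrix.cons_val_one]

lemma image_disk {g : ℝ × ℝ → ℝ × ℝ} (hg : IsSymp g) : g '' disk = disk := by
  obtain ⟨hsm, hmaps, hjac, g', hsm', hmaps', hleft, hright⟩ := hg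
  apply Set.Subset.antisymm
  · exact Set.image_subset_iff.2 hmaps
  · intro p hp
    exact ⟨g' p, hmaps' hp, hright p hp⟩

lemma injOn_disk {g : ℝ × ℝ → ℝ × ℝ} (hg : IsSymp g) : Set.InjOn g disk := by
  obtain ⟨hsm, hmaps, hjac, g', hsm', hmaps', hleft, hright⟩ := hg
  intro p hp q hq hpq
  have := hleft p hp
  have := hleft q hq
  rw [← hleft p hp, ← hleft q hq, hpq]

/-- Change of variables for an area-preserving diffeomorphism of the disk. -/
lemma setIntegral_comp_symp {g : ℝ × ℝ → ℝ × ℝ} (hg : IsSymp g) (f : ℝ × ℝ → ℝ) :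
    ∫ p in disk, f (g p) = ∫ p in disk, f p := by
  have hdg := hg.1.differentiable (by simp)
  have h := integral_image_eq_integral_abs_det_fderiv_smul volume measurableSet_disk
    (fun x _ => (hdg x).hasFDerivAt.hasFDerivWithinAt) (injOn_disk hg) f
  rw [image_disk hg] at h
  rw [h]
  apply setIntegral_congr_fun measurableSet_disk
  intro p hp
  show f (g p) = |(fderiv ℝ g p).det| • f (g p)
  rw [clm_det_eq_jacDet (hdg p), hg.2.2.1 p hp]
  simp

lemma convex_disk : Convex ℝ disk := by
  intro p hp q hq a b ha hb hab
  have hp' : p.1 ^ 2 + p.2 ^ 2 ≤ 1 := hp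
  have hq' : q.1 ^ 2 + q.2 ^ 2 ≤ 1 := hq
  show (a • p + b • q).1 ^ 2 + (a • p + b • q).2 ^ 2 ≤ 1
  simp only [Prod.smul_fst, Prod.smul_snd, Prod.fst_add, Prod.snd_add, smul_eq_mul]
  nlinarith [mul_nonneg (mul_nonneg ha hb) (sq_nonneg (p.1 - q.1)),
    mul_nonneg (mul_nonneg ha hb) (sq_nonneg (p.2 - q.2)),
    mul_nonneg (mul_nonneg ha ha) (sub_nonneg.2 hp'),
    mul_nonneg (mul_nonneg hb hb) (sub_nonneg.2 hq'),
    mul_nonneg (mul_nonneg ha hb)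
      (by linarith : (0:ℝ) ≤ 2 - (p.1 ^ 2 + p.2 ^ 2) - (q.1 ^ 2 + q.2 ^ 2))]

lemma circle_mem_disk (θ : ℝ) : ((Real.cos θ, Real.sin θ) : ℝ × ℝ) ∈ disk := by
  show Real.cos θ ^ 2 + Real.sin θ ^ 2 ≤ 1
  rw [Real.cos_sq_add_sin_sq]

lemma volume_disk_toReal_le : (volume disk).toReal ≤ 4 := by
  have hsub : disk ⊆ Icc ((-1 : ℝ), (-1 : ℝ)) ((1 : ℝ), (1 : ℝ)) := by
    intro p hp
    have hp' : p.1 ^ 2 + p.2 ^ 2 ≤ 1 := hp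
    simp only [Icc_prod_eq, Set.mem_prod, Set.mem_Icc]
    constructor <;> constructor <;> nlinarith [sq_nonneg p.1, sq_nonneg p.2]
  have h1 : volume disk ≤ volume (Icc ((-1 : ℝ), (-1 : ℝ)) ((1 : ℝ), (1 : ℝ))) :=
    measure_mono hsub
  have h2 : volume (Icc ((-1 : ℝ), (-1 : ℝ)) ((1 : ℝ), (1 : ℝ))) = 4 := by
    rw [Icc_prod_eq, Measure.volume_eq_prod, Measure.prod_prod]
    show volume (Icc (-1:ℝ) 1) * volume (Icc (-1:ℝ) 1) = 4
    rw [Real.volume_Icc, show (1:ℝ) - (-1) = 2 by norm_num, ← ENNReal.ofReal_mul (by norm_num)]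
    norm_num
  have h3 := ENNReal.toReal_mono (by rw [h2]; norm_num) h1
  rw [h2] at h3
  calc (volume disk).toReal ≤ (4 : ENNReal).toReal := h3
    _ = 4 := by norm_num

lemma abs_setIntegral_disk_le {f : ℝ × ℝ → ℝ} {C : ℝ}
    (hf : Continuous f) (hC : ∀ p ∈ disk, |f p| ≤ C) :
    |∫ p in disk, f p| ≤ 4 * C := by
  have hC0 : 0 ≤ C := le_trans (abs_nonneg _) (hC (0, 0) (by show (0:ℝ)^2 + 0^2 ≤ 1; norm_num))
  have h := norm_setIntegral_le_of_norm_le_const (μ := volume) (s := disk) (f := f)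
    volume_disk_lt_top (fun p hp => by rw [Real.norm_eq_abs]; exact hC p hp)
  rw [Real.norm_eq_abs] at h
  calc |∫ p in disk, f p| ≤ C * (volume disk).toReal := h
    _ ≤ C * 4 := by
        exact mul_le_mul_of_nonneg_left volume_disk_toReal_le hC0
    _ = 4 * C := by ring

lemma abs_boundary_integral_le {f : ℝ → ℝ} {C : ℝ} (h : ∀ θ : ℝ, |f θ| ≤ C) :
    |∫ θ in (-π)..π, f θ| ≤ 2 * π * C := by
  have hpi := Real.pi_pos
  have := intervalIntegral.norm_integral_le_of_norm_le_const (a := -π) (b := π) (C := C)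
    (f := f) (fun x _ => by rw [Real.norm_eq_abs]; exact h x)
  rw [Real.norm_eq_abs] at this
  calc |∫ θ in (-π)..π, f θ| ≤ C * |π - (-π)| := this
    _ = 2 * π * C := by
        rw [abs_of_pos (by linarith)]; ring

lemma tau_diff_bound {F : ℝ × ℝ → ℝ} (hF : ContDiff ℝ (⊤ : ℕ∞) F) :
    ∃ C : ℝ, ∀ g : ℝ × ℝ → ℝ × ℝ, IsSymp g → |tauEta F g - tauL g| ≤ C := by
  obtain ⟨MF, hMF⟩ := isCompact_disk.exists_bound_of_continuousOn hF.continuous.continuousOn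
  obtain ⟨Mx, hMx⟩ := isCompact_disk.exists_bound_of_continuousOn (cont_pdx hF).continuousOn
  obtain ⟨My, hMy⟩ := isCompact_disk.exists_bound_of_continuousOn (cont_pdy hF).continuousOn
  set M : ℝ := max MF 0 with hM_def
  set M1 : ℝ := max (max Mx My) 0 with hM1_def
  have hM0 : 0 ≤ M := le_max_right _ _
  have hM10 : 0 ≤ M1 := le_max_right _ _
  have hMb : ∀ p ∈ disk, |F p| ≤ M := fun p hp =>
    le_trans (by simpa [Real.norm_eq_abs] using hMF p hp) (le_max_left _ _)
  have hMxb : ∀ p ∈ disk, |pdx F p| ≤ M1 := fun p hp =>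
    le_trans (by simpa [Real.norm_eq_abs] using hMx p hp)
      (le_trans (le_max_left _ _) (le_max_left _ _))
  have hMyb : ∀ p ∈ disk, |pdy F p| ≤ M1 := fun p hp =>
    le_trans (by simpa [Real.norm_eq_abs] using hMy p hp)
      (le_trans (le_max_right _ _) (le_max_left _ _))
  have hpi := Real.pi_pos
  refine ⟨(1/2) * (2*π*M + 2*(4*M)) + 2*π*(M*(M1+M1)) + (1/2) * (2*π*M + 2*(4*M)), ?_⟩
  intro g hg
  obtain ⟨hsm, hmaps, hjac, g', hsm', hmaps', hleft, hright⟩ := id hg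
  -- notation for components and smoothness
  have hu : ContDiff ℝ (⊤ : ℕ∞) (fun q => (g q).1) := contDiff_fst.comp hsm
  have hv : ContDiff ℝ (⊤ : ℕ∞) (fun q => (g q).2) := contDiff_snd.comp hsm
  have hgc := hsm.continuous
  have hgc' := hsm'.continuous
  have hh : ContDiff ℝ (⊤ : ℕ∞) (fun q => F (g q)) := hF.comp hsm
  have hh' : ContDiff ℝ (⊤ : ℕ∞) (fun q => F (g' q)) := hF.comp hsm'
  -- continuity facts
  have cux : Continuous (pdx (fun q => (g q).1)) := cont_pdx hu
  have cuy : Continuous (pdy (fun q => (g q).1)) := cont_pdy hu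
  have cvx : Continuous (pdx (fun q => (g q).2)) := cont_pdx hv
  have cvy : Continuous (pdy (fun q => (g q).2)) := cont_pdy hv
  have cFx : Continuous (pdx F) := cont_pdx hF
  have cFy : Continuous (pdy F) := cont_pdy hF
  have chx : Continuous (pdx (fun q => F (g q))) := cont_pdx hh
  have chy : Continuous (pdy (fun q => F (g q))) := cont_pdy hh
  have chx' : Continuous (pdx (fun q => F (g' q))) := cont_pdx hh'
  have chy' : Continuous (pdy (fun q => F (g' q))) := cont_pdy hh'
  have cF := hF.continuous
  -- the integrands
  set Iη : ℝ × ℝ → ℝ := fun p =>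
    (((-(g p).2 / 2 + pdx F (g p)) * pdx (fun q => (g q).1) p +
        ((g p).1 / 2 + pdy F (g p)) * pdx (fun q => (g q).2) p) *
          (p.1 / 2 + pdy F p) -
     ((-(g p).2 / 2 + pdx F (g p)) * pdy (fun q => (g q).1) p +
        ((g p).1 / 2 + pdy F (g p)) * pdy (fun q => (g q).2) p) *
          (-p.2 / 2 + pdx F p)) with hIη_def
  set Ilam : ℝ × ℝ → ℝ := fun p =>
    (p.1 * ((g p).1 * pdx (fun q => (g q).2) p - (g p).2 * pdx (fun q => (g q).1) p) +
     p.2 * ((g p).1 * pdy (fun q => (g q).2) p - (g p).2 * pdy (fun q => (g q).1) p))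
    with hIlam_def
  set f1 : ℝ × ℝ → ℝ := fun p =>
    p.1 * pdx (fun q => F (g q)) p + p.2 * pdy (fun q => F (g q)) p with hf1_def
  set f2 : ℝ × ℝ → ℝ := fun p =>
    pdx (fun q => F (g q)) p * pdy F p - pdy (fun q => F (g q)) p * pdx F p with hf2_def
  set cfun : ℝ × ℝ → ℝ := fun z =>
    -(1/2) * (z.1 * pdx (fun q => F (g' q)) z + z.2 * pdy (fun q => F (g' q)) z) with hcfun_def
  have cIη : Continuous Iη := by rw [hIη_def]; fun_prop
  have cIlam : Continuous Ilam := by rw [hIlam_def]; fun_prop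
  have cf1 : Continuous f1 := by rw [hf1_def]; fun_prop
  have cf2 : Continuous f2 := by rw [hf2_def]; fun_prop
  have ccfun : Continuous cfun := by rw [hcfun_def]; fun_prop
  have cf3 : Continuous (fun p => cfun (g p)) := ccfun.comp hgc
  -- a.e. pointwise identity
  have hfr : volume (frontier disk) = 0 := convex_disk.addHaar_frontier volume
  have h0 : ∀ᵐ p : ℝ × ℝ, p ∉ frontier disk := by
    rw [MeasureTheory.ae_iff]
    simpa using hfr
  have hae : ∀ᵐ p : ℝ × ℝ, p ∈ disk →
      Iη p - (1/4) * Ilam p = (1/2) * f1 p + f2 p + cfun (g p) := by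
    filter_upwards [h0] with p hpfr hpdisk
    have hpint : p ∈ interior disk := by
      by_contra hint
      exact hpfr ⟨subset_closure hpdisk, hint⟩
    have hgd : DifferentiableAt ℝ g p := hsm.differentiable (by simp) p
    have hFd : ∀ z : ℝ × ℝ, DifferentiableAt ℝ F z := fun z => hF.differentiable (by simp) z
    have hhx : pdx (fun q => F (g q)) p =
        pdx F (g p) * pdx (fun q => (g q).1) p + pdy F (g p) * pdx (fun q => (g q).2) p :=
      pdx_comp (hFd _) hgd
    have hhy : pdy (fun q => F (g q)) p =
        pdx F (g p) * pdy (fun q => (g q).1) p + pdy F (g p) * pdy (fun q => (g q).2) p :=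
      pdy_comp (hFd _) hgd
    have hloc : F =ᶠ[𝓝 p] (fun q => (fun z => F (g' z)) (g q)) := by
      filter_upwards [isOpen_interior.mem_nhds hpint] with q hq
      have hq' : q ∈ disk := interior_subset hq
      show F q = F (g' (g q))
      rw [hleft q hq']
    have hh'd : DifferentiableAt ℝ (fun z => F (g' z)) (g p) :=
      (hh'.differentiable (by simp)) (g p)
    have hFx : pdx F p =
        pdx (fun q => F (g' q)) (g p) * pdx (fun q => (g q).1) p +
        pdy (fun q => F (g' q)) (g p) * pdx (fun q => (g q).2) p := by
      have he : pdx F p = pdx (fun q => (fun z => F (g' z)) (g q)) p := by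
        unfold pdx
        rw [hloc.fderiv_eq]
      rw [he, pdx_comp hh'd hgd]
    have hFy : pdy F p =
        pdx (fun q => F (g' q)) (g p) * pdy (fun q => (g q).1) p +
        pdy (fun q => F (g' q)) (g p) * pdy (fun q => (g q).2) p := by
      have he : pdy F p = pdy (fun q => (fun z => F (g' z)) (g q)) p := by
        unfold pdy
        rw [hloc.fderiv_eq]
      rw [he, pdy_comp hh'd hgd]
    have hj : pdx (fun q => (g q).1) p * pdy (fun q => (g q).2) p -
        pdy (fun q => (g q).1) p * pdx (fun q => (g q).2) p = 1 := hjac p hpdisk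
    rw [hIη_def, hIlam_def, hf1_def, hf2_def, hcfun_def]
    simp only []
    rw [hhx, hhy, hFx, hFy]
    linear_combination (-(1/2) * ((g p).1 * pdx (fun q => F (g' q)) (g p) +
      (g p).2 * pdy (fun q => F (g' q)) (g p))) * hj
  -- rewrite the difference as a sum of three integrals
  have hdiff : tauEta F g - tauL g =
      (1/2) * (∫ p in disk, f1 p) + (∫ p in disk, f2 p) + (∫ p in disk, cfun (g p)) := by
    have e1 : tauEta F g - tauL g = ∫ p in disk, (Iη p - (1/4) * Ilam p) := by
      unfold tauEta tauL
      have hsub := integral_sub (integrableOn_disk cIη)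
        ((integrableOn_disk cIlam).const_mul (1/4 : ℝ))
      rw [hsub, integral_const_mul]
    have int1 : IntegrableOn (fun p => 1/2 * f1 p) disk :=
      (integrableOn_disk cf1).const_mul _
    have int12 : IntegrableOn (fun p => 1/2 * f1 p + f2 p) disk :=
      int1.add (integrableOn_disk cf2)
    rw [e1, setIntegral_congr_ae measurableSet_disk hae,
      integral_add int12 (integrableOn_disk cf3),
      integral_add int1 (integrableOn_disk cf2),
      integral_const_mul]
  -- bound each of the three pieces
  have hγdisk : ∀ θ : ℝ, g (Real.cos θ, Real.sin θ) ∈ disk :=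
    fun θ => hmaps (circle_mem_disk θ)
  have hγdisk' : ∀ θ : ℝ, g' (Real.cos θ, Real.sin θ) ∈ disk :=
    fun θ => hmaps' (circle_mem_disk θ)
  -- piece 1
  have hb1 : |∫ p in disk, f1 p| ≤ 2*π*M + 2*(4*M) := by
    rw [hf1_def, green_radial hh]
    have hbd : |∫ θ in (-π)..π, F (g (Real.cos θ, Real.sin θ))| ≤ 2*π*M :=
      abs_boundary_integral_le (fun θ => hMb _ (hγdisk θ))
    have hin : |∫ p in disk, F (g p)| ≤ 4*M :=
      abs_setIntegral_disk_le (cF.comp hgc) (fun p hp => hMb _ (hmaps hp))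
    calc |(∫ θ in (-π)..π, F (g (Real.cos θ, Real.sin θ))) - 2 * ∫ p in disk, F (g p)|
        ≤ |∫ θ in (-π)..π, F (g (Real.cos θ, Real.sin θ))| + |2 * ∫ p in disk, F (g p)| :=
          abs_sub _ _
      _ ≤ 2*π*M + 2*(4*M) := by
          rw [abs_mul]
          have : |(2:ℝ)| = 2 := by norm_num
          rw [this]
          linarith
  -- piece 2
  have hb2 : |∫ p in disk, f2 p| ≤ 2*π*(M*(M1+M1)) := by
    rw [hf2_def, green_curl hh hF]
    apply abs_boundary_integral_le
    intro θ
    have h1 := hMb _ (hγdisk θ)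
    have h2 := hMxb _ (circle_mem_disk θ)
    have h3 := hMyb _ (circle_mem_disk θ)
    have h4 := abs_cos_le_one θ
    have h5 := abs_sin_le_one θ
    calc |F (g (Real.cos θ, Real.sin θ)) *
        (pdy F (Real.cos θ, Real.sin θ) * Real.cos θ -
         pdx F (Real.cos θ, Real.sin θ) * Real.sin θ)|
        = |F (g (Real.cos θ, Real.sin θ))| *
          |pdy F (Real.cos θ, Real.sin θ) * Real.cos θ -
           pdx F (Real.cos θ, Real.sin θ) * Real.sin θ| := abs_mul _ _
      _ ≤ M * (M1 + M1) := by
          apply mul_le_mul h1 ?_ (abs_nonneg _) hM0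
          calc |pdy F (Real.cos θ, Real.sin θ) * Real.cos θ -
              pdx F (Real.cos θ, Real.sin θ) * Real.sin θ|
              ≤ |pdy F (Real.cos θ, Real.sin θ) * Real.cos θ| +
                |pdx F (Real.cos θ, Real.sin θ) * Real.sin θ| := abs_sub _ _
            _ ≤ M1 + M1 := by
                rw [abs_mul, abs_mul]
                have e1 : |pdy F (Real.cos θ, Real.sin θ)| * |Real.cos θ| ≤ M1 * 1 :=
                  mul_le_mul h3 h4 (abs_nonneg _) (le_trans (abs_nonneg _) h3)
                have e2 : |pdx F (Real.cos θ, Real.sin θ)| * |Real.sin θ| ≤ M1 * 1 :=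
                  mul_le_mul h2 h5 (abs_nonneg _) (le_trans (abs_nonneg _) h2)
                linarith
  -- piece 3
  have hb3 : |∫ p in disk, cfun (g p)| ≤ (1/2) * (2*π*M + 2*(4*M)) := by
    rw [setIntegral_comp_symp hg cfun, hcfun_def]
    have e1 : ∫ z in disk, -(1/2) *
        (z.1 * pdx (fun q => F (g' q)) z + z.2 * pdy (fun q => F (g' q)) z) =
        -(1/2) * ∫ z in disk,
          (z.1 * pdx (fun q => F (g' q)) z + z.2 * pdy (fun q => F (g' q)) z) :=
      integral_const_mul _ _
    rw [e1, green_radial hh']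
    have hbd : |∫ θ in (-π)..π, F (g' (Real.cos θ, Real.sin θ))| ≤ 2*π*M :=
      abs_boundary_integral_le (fun θ => hMb _ (hγdisk' θ))
    have hin : |∫ p in disk, F (g' p)| ≤ 4*M :=
      abs_setIntegral_disk_le (cF.comp hgc') (fun p hp => hMb _ (hmaps' hp))
    rw [abs_mul]
    have : |(-(1/2) : ℝ)| = 1/2 := by norm_num
    rw [this]
    apply mul_le_mul_of_nonneg_left ?_ (by norm_num : (0:ℝ) ≤ 1/2)
    calc |(∫ θ in (-π)..π, F (g' (Real.cos θ, Real.sin θ))) - 2 * ∫ p in disk, F (g' p)|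
        ≤ |∫ θ in (-π)..π, F (g' (Real.cos θ, Real.sin θ))| + |2 * ∫ p in disk, F (g' p)| :=
          abs_sub _ _
      _ ≤ 2*π*M + 2*(4*M) := by
          rw [abs_mul]
          have h2 : |(2:ℝ)| = 2 := by norm_num
          rw [h2]
          linarith
  -- assemble
  rw [hdiff]
  calc |(1/2) * (∫ p in disk, f1 p) + (∫ p in disk, f2 p) + (∫ p in disk, cfun (g p))|
      ≤ |(1/2) * (∫ p in disk, f1 p) + (∫ p in disk, f2 p)| + |∫ p in disk, cfun (g p)| :=
        abs_add_le _ _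
    _ ≤ |(1/2) * (∫ p in disk, f1 p)| + |∫ p in disk, f2 p| + |∫ p in disk, cfun (g p)| := by
        linarith [abs_add_le ((1/2) * (∫ p in disk, f1 p)) (∫ p in disk, f2 p)]
    _ ≤ (1/2) * (2*π*M + 2*(4*M)) + 2*π*(M*(M1+M1)) + (1/2) * (2*π*M + 2*(4*M)) := by
        rw [abs_mul]
        have h2 : |(1/2:ℝ)| = 1/2 := by norm_num
        rw [h2]
        have := mul_le_mul_of_nonneg_left hb1 (by norm_num : (0:ℝ) ≤ 1/2)
        linarith

lemma isSymp_id : IsSymp (id : ℝ × ℝ → ℝ × ℝ) := by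
  refine ⟨contDiff_id, fun p hp => hp, fun p hp => ?_,
    id, contDiff_id, fun p hp => hp, fun p _ => rfl, fun p _ => rfl⟩
  unfold jacDet
  simp only [id_eq]
  rw [pdx_fst, pdy_snd, pdy_fst, pdx_snd]
  norm_num

lemma jacDet_comp {g h : ℝ × ℝ → ℝ × ℝ} (hg : ContDiff ℝ (⊤ : ℕ∞) g) (hh : ContDiff ℝ (⊤ : ℕ∞) h)
    (p : ℝ × ℝ) : jacDet (g ∘ h) p = jacDet g (h p) * jacDet h p := by
  have hgd1 : DifferentiableAt ℝ (fun z => (g z).1) (h p) :=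
    ((contDiff_fst.comp hg).differentiable (by simp)) (h p)
  have hgd2 : DifferentiableAt ℝ (fun z => (g z).2) (h p) :=
    ((contDiff_snd.comp hg).differentiable (by simp)) (h p)
  have hhd : DifferentiableAt ℝ h p := hh.differentiable (by simp) p
  have e1 := pdx_comp (F := fun z => (g z).1) (g := h) hgd1 hhd
  have e2 := pdy_comp (F := fun z => (g z).1) (g := h) hgd1 hhd
  have e3 := pdx_comp (F := fun z => (g z).2) (g := h) hgd2 hhd
  have e4 := pdy_comp (F := fun z => (g z).2) (g := h) hgd2 hhd
  show pdx (fun q => (g (h q)).1) p * pdy (fun q => (g (h q)).2) p -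
      pdy (fun q => (g (h q)).1) p * pdx (fun q => (g (h q)).2) p =
    jacDet g (h p) * jacDet h p
  rw [e1, e2, e3, e4]
  unfold jacDet
  ring

lemma IsSymp.comp {g h : ℝ × ℝ → ℝ × ℝ} (hg : IsSymp g) (hh : IsSymp h) :
    IsSymp (g ∘ h) := by
  obtain ⟨hgsm, hgmaps, hgjac, g', hgsm', hgmaps', hgleft, hgright⟩ := hg
  obtain ⟨hhsm, hhmaps, hhjac, h', hhsm', hhmaps', hhleft, hhright⟩ := hh
  refine ⟨hgsm.comp hhsm, hgmaps.comp hhmaps, ?_, h' ∘ g', hhsm'.comp hgsm',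
    hhmaps'.comp hgmaps', ?_, ?_⟩
  · intro p hp
    rw [jacDet_comp hgsm hhsm, hgjac (h p) (hhmaps hp), hhjac p hp, mul_one]
  · intro p hp
    show h' (g' (g (h p))) = p
    rw [hgleft (h p) (hhmaps hp), hhleft p hp]
  · intro p hp
    show g (h (h' (g' p))) = p
    rw [hhright (g' p) (hgmaps' hp), hgright p hp]

lemma isSymp_iterate {g : ℝ × ℝ → ℝ × ℝ} (hg : IsSymp g) (n : ℕ) : IsSymp (g^[n]) := by
  induction n with
  | zero => simpa using isSymp_id
  | succ n ih =>
      rw [Function.iterate_succ']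
      exact hg.comp ih


/-- for any smooth `F : D → ℝ` and `η = λ + dF` (so `dη = ω`),
the difference `τ_η - τ_λ` is bounded on `Symp(D)`; consequently `τ_η` is a
quasi-morphism whenever `τ_λ` is, and the homogenizations of `τ_η` and `τ_λ`
coincide. -/
theorem tauEta_sub_tauL_bounded
    (F : ℝ × ℝ → ℝ) (hF : ContDiff ℝ (⊤ : ℕ∞) F) :
    (∃ C : ℝ, ∀ g : ℝ × ℝ → ℝ × ℝ, IsSymp g → |tauEta F g - tauL g| ≤ C) ∧
    ((∃ C : ℝ, ∀ g h : ℝ × ℝ → ℝ × ℝ, IsSymp g → IsSymp h →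
        |tauL (g ∘ h) - tauL g - tauL h| ≤ C) →
      (∃ C : ℝ, ∀ g h : ℝ × ℝ → ℝ × ℝ, IsSymp g → IsSymp h →
        |tauEta F (g ∘ h) - tauEta F g - tauEta F h| ≤ C)) ∧
    (∀ g : ℝ × ℝ → ℝ × ℝ, IsSymp g → ∀ L : ℝ,
      Tendsto (fun n : ℕ => tauL g^[n] / (n : ℝ)) atTop (𝓝 L) ↔
      Tendsto (fun n : ℕ => tauEta F g^[n] / (n : ℝ)) atTop (𝓝 L)) := by
  obtain ⟨C0, hC0⟩ := tau_diff_bound hF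
  refine ⟨⟨C0, hC0⟩, ?_, ?_⟩
  · rintro ⟨CL, hCL⟩
    refine ⟨3 * C0 + CL, ?_⟩
    intro g h hg hh
    have h1 := hC0 (g ∘ h) (hg.comp hh)
    have h2 := hC0 g hg
    have h3 := hC0 h hh
    have h4 := hCL g h hg hh
    rw [abs_le] at h1 h2 h3 h4 ⊢
    constructor <;> [linarith [h1.1, h2.2, h3.2, h4.1]; linarith [h1.2, h2.1, h3.1, h4.2]]
  · intro g hg L
    have hd : ∀ n : ℕ, |tauEta F g^[n] - tauL g^[n]| ≤ C0 :=
      fun n => hC0 _ (isSymp_iterate hg n)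
    have hdiff0 : Tendsto (fun n : ℕ => tauEta F g^[n] / (n : ℝ) - tauL g^[n] / (n : ℝ))
        atTop (𝓝 0) := by
      apply squeeze_zero_norm (a := fun n : ℕ => C0 / (n : ℝ))
      · intro n
        rw [div_sub_div_same, Real.norm_eq_abs, abs_div, Nat.abs_cast]
        rcases Nat.eq_zero_or_pos n with hn | hn
        · subst hn
          simp
        · have hn' : (0:ℝ) < (n : ℝ) := by exact_mod_cast hn
          exact (div_le_div_iff_of_pos_right hn').mpr (hd n)
      · exact tendsto_const_div_atTop_nhds_zero_nat C0
    constructor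
    · intro hL
      have h2 := hL.add hdiff0
      rw [add_zero] at h2
      have he : (fun n : ℕ => tauL g^[n] / (n : ℝ) +
          (tauEta F g^[n] / (n : ℝ) - tauL g^[n] / (n : ℝ))) =
          fun n : ℕ => tauEta F g^[n] / (n : ℝ) := by
        funext n; ring
      rwa [he] at h2
    · intro hE
      have h2 := hE.sub hdiff0
      rw [sub_zero] at h2
      have he : (fun n : ℕ => tauEta F g^[n] / (n : ℝ) -
          (tauEta F g^[n] / (n : ℝ) - tauL g^[n] / (n : ℝ))) =
          fun n : ℕ => tauL g^[n] / (n : ℝ) := by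
        funext n; ring
      rwa [he] at h2
end
end
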